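/- arXiv:2305.18258 — 8 statements merged into one kernel-verified Lean document; each statement's English description precedes it below -/
import Mathlib

section
/- Let K and H be positive integers and let c > 0, eta > 0, B > 0, M > 0, d >= 0, eps >= 0 be real numbers. Suppose we are given real numbers a_k, b_k, Delta_k for k in {1,...,K} and nonnegative real numbers e(k,h,s) for k in {1,...,K}, h in {1,...,H}, s in {1,...,k-1}, such that: (i) sum_{k=1}^K a_k <= eta * sum_{k=1}^K Delta_k; (ii) for every k, Delta_k <= -c * sum_{h=1}^H sum_{s=1}^{k-1} e(k,h,s) + c*B*M; (iii) for every mu > 0, sum_{k=1}^K b_k <= (mu/2) * sum_{k=1}^K sum_{h=1}^H sum_{s=1}^{k-1} e(k,h,s) + d/(2*mu) + sqrt(d*H*K) + eps*H*K. Then sum_{k=1}^K (a_k + b_k) <= c*eta*B*K*M + d/(4*c*eta) + sqrt(d*H*K) + eps*H*K. -/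
open Finset

theorem Finset.sum_le_neg_mul_sum_add_card_mul {ι : Type*} (s : Finset ι) (f g : ι → ℝ)
    (c D : ℝ) (h : ∀ k ∈ s, f k ≤ -c * g k + D) :
    ∑ k ∈ s, f k ≤ -c * ∑ k ∈ s, g k + #s * D := by
  calc ∑ k ∈ s, f k ≤ ∑ k ∈ s, (-c * g k + D) := sum_le_sum h
    _ = -c * ∑ k ∈ s, g k + #s * D := by
      rw [sum_add_distrib, ← mul_sum, sum_const, nsmul_eq_mul]

theorem stmt0_general (K H : ℕ)
    (c η B M d eps : ℝ) (hc : 0 < c) (hη : 0 < η)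
    (a b Δ : ℕ → ℝ) (e : ℕ → ℕ → ℕ → ℝ)
    (h1 : ∑ k ∈ Icc 1 K, a k ≤ η * ∑ k ∈ Icc 1 K, Δ k)
    (h2 : ∀ k ∈ Icc 1 K,
      Δ k ≤ -c * ∑ h ∈ Icc 1 H, ∑ s ∈ Icc 1 (k - 1), e k h s + c * B * M)
    (h3 : ∀ μ : ℝ, 0 < μ →
      ∑ k ∈ Icc 1 K, b k ≤
        μ / 2 * ∑ k ∈ Icc 1 K, ∑ h ∈ Icc 1 H, ∑ s ∈ Icc 1 (k - 1), e k h s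
        + d / (2 * μ) + Real.sqrt (d * H * K) + eps * H * K) :
    ∑ k ∈ Icc 1 K, (a k + b k) ≤
      c * η * B * K * M + d / (4 * (c * η)) + Real.sqrt (d * H * K) + eps * H * K := by
  set S := ∑ k ∈ Icc 1 K, ∑ h ∈ Icc 1 H, ∑ s ∈ Icc 1 (k - 1), e k h s
  have hΔ : ∑ k ∈ Icc 1 K, Δ k ≤ -c * S + K * (c * B * M) := by
    simpa only [Nat.card_Icc, add_tsub_cancel_right] using
      sum_le_neg_mul_sum_add_card_mul _ _ _ c (c * B * M) h2
  have ha : ∑ k ∈ Icc 1 K, a k ≤ η * (-c * S + K * (c * B * M)) :=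
    h1.trans (mul_le_mul_of_nonneg_left hΔ hη.le)
  -- With μ = 2cη the discrepancy term μ/2 · S is exactly the one the bound on `a` subtracts.
  have hb := h3 (2 * (c * η)) (by positivity)
  have hμ : 2 * (c * η) / 2 * S + d / (2 * (2 * (c * η))) = c * η * S + d / (4 * (c * η)) := by
    ring
  rw [sum_add_distrib]
  linarith

/-- Deterministic core of the regret analysis of MEX (Theorem 4.1). -/
theorem stmt0 (K H : ℕ) (hK : 0 < K) (hH : 0 < H)
    (c η B M d eps : ℝ) (hc : 0 < c) (hη : 0 < η) (hB : 0 < B) (hM : 0 < M)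
    (hd : 0 ≤ d) (heps : 0 ≤ eps)
    (a b Δ : ℕ → ℝ) (e : ℕ → ℕ → ℕ → ℝ)
    (he : ∀ k ∈ Icc 1 K, ∀ h ∈ Icc 1 H, ∀ s ∈ Icc 1 (k - 1), 0 ≤ e k h s)
    (h1 : ∑ k ∈ Icc 1 K, a k ≤ η * ∑ k ∈ Icc 1 K, Δ k)
    (h2 : ∀ k ∈ Icc 1 K,
      Δ k ≤ -c * ∑ h ∈ Icc 1 H, ∑ s ∈ Icc 1 (k - 1), e k h s + c * B * M)
    (h3 : ∀ μ : ℝ, 0 < μ →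
      ∑ k ∈ Icc 1 K, b k ≤
        μ / 2 * ∑ k ∈ Icc 1 K, ∑ h ∈ Icc 1 H, ∑ s ∈ Icc 1 (k - 1), e k h s
        + d / (2 * μ) + Real.sqrt (d * H * K) + eps * H * K) :
    ∑ k ∈ Icc 1 K, (a k + b k) ≤
      c * η * B * K * M + d / (4 * (c * η)) + Real.sqrt (d * H * K) + eps * H * K :=
  stmt0_general K H c η B M d eps hc hη a b Δ e h1 h2 h3
end

section
/- Let K and H be positive integers and let c1 > 0, c2 > 0, d >= 1, B >= 1, and M >= H be real numbers. Set eta = sqrt(d/(M*B*K)) and eps = 1/sqrt(H*K). Suppose we are given real numbers a_k, b_k, a'_k, b'_k, Delta_k, Delta'_k for k in {1,...,K} and nonnegative real numbers ef(k,h,s) and eg(k,h,s) for k in {1,...,K}, h in {1,...,H}, s in {1,...,k-1}, such that: (i) sum_k a_k <= eta * sum_k Delta_k; (ii) for every k, Delta_k <= -c1 * sum_{h,s<k} ef(k,h,s) + c1*B*M; (iii) for every zeta > 0, sum_k b_k <= (zeta/2) * sum_{k,h,s<k} ef(k,h,s) + d/(2*zeta) + sqrt(d*H*K) + eps*H*K;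 (iv) sum_k a'_k <= eta * sum_k Delta'_k; (v) for every k, Delta'_k <= -c2 * sum_{h,s<k} eg(k,h,s) + c2*B*M; (vi) for every zeta > 0, sum_k b'_k <= (zeta/2) * sum_{k,h,s<k} eg(k,h,s) + d/(2*zeta) + sqrt(d*H*K) + eps*H*K. Then sum_{k=1}^K (a_k + b_k + a'_k + b'_k) <= (c1 + c2 + 1/(4*c1) + 1/(4*c2) + 4) * sqrt(d*M*B*K). -/
/-!
Each player's regret splits into an optimism term, bounded by `η` times the summed loss
differences, and a TGEC term, bounded for every `ζ > 0`. The loss differences carry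
`-c · (total discrepancy)`, and the TGEC bound carries `+ ζ/2 · (total discrepancy)`; the choice
`ζ = 2ηc` makes the two cancel, leaving `c · ηBMK + d / (4ηc)` plus the TGEC residual. With
`η = √(d / MBK)` both `ηMBK` and `d / η` equal `√(dMBK)`, and the residual
`√(dHK) + εHK = √(dHK) + √(HK)` is at most `2√(dMBK)` because `H ≤ M`, `1 ≤ B` and `1 ≤ d`.
-/

open Finset

theorem add_le_of_le_mul_of_forall_le {A A' D S η c L d R : ℝ} (hη : 0 < η) (hc : 0 < c)
    (hA : A ≤ η * D) (hD : D ≤ -c * S + c * L)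
    (hA' : ∀ ζ : ℝ, 0 < ζ → A' ≤ ζ / 2 * S + d / (2 * ζ) + R) :
    A + A' ≤ c * (η * L) + d / η / (4 * c) + R := by
  have hcancel := hA' (2 * η * c) (by positivity)
  have hA_le : A ≤ η * (-c * S + c * L) := hA.trans (mul_le_mul_of_nonneg_left hD hη.le)
  have hζ : d / (2 * (2 * η * c)) = d / η / (4 * c) := by rw [div_div]; ring_nf
  rw [hζ] at hcancel
  linarith

theorem sum_add_le_of_le_mul_sum_of_forall_le {ι : Type*} (s : Finset ι) (a a' Δ S : ι → ℝ)
    {η c L d R : ℝ} (hη : 0 < η) (hc : 0 < c)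
    (ha : ∑ k ∈ s, a k ≤ η * ∑ k ∈ s, Δ k) (hΔ : ∀ k ∈ s, Δ k ≤ -c * S k + c * L)
    (ha' : ∀ ζ : ℝ, 0 < ζ → ∑ k ∈ s, a' k ≤ ζ / 2 * ∑ k ∈ s, S k + d / (2 * ζ) + R) :
    ∑ k ∈ s, (a k + a' k) ≤ c * (η * (L * #s)) + d / η / (4 * c) + R := by
  rw [sum_add_distrib]
  refine add_le_of_le_mul_of_forall_le hη hc ha ?_ ha'
  calc ∑ k ∈ s, Δ k ≤ ∑ k ∈ s, (-c * S k + c * L) := sum_le_sum hΔ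
    _ = -c * ∑ k ∈ s, S k + c * (L * #s) := by
      rw [sum_add_distrib, ← mul_sum, sum_const, nsmul_eq_mul]; ring

theorem Real.sqrt_div_mul_self {d Q : ℝ} (hd : 0 ≤ d) :
    √(d / Q) * Q = √(d * Q) := by
  rw [Real.sqrt_div hd, Real.sqrt_mul hd, div_mul_eq_mul_div, mul_div_assoc, Real.div_sqrt]

theorem Real.div_sqrt_div {d Q : ℝ} (hd : 0 ≤ d) :
    d / √(d / Q) = √(d * Q) := by
  rw [Real.sqrt_div hd, div_div_eq_mul_div, mul_div_right_comm, Real.div_sqrt,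
    Real.sqrt_mul hd]

theorem sqrt_mul_add_one_div_sqrt_mul_le {d B M : ℝ} {H K : ℕ} (hd : 1 ≤ d) (hB : 1 ≤ B)
    (hM : (H : ℝ) ≤ M) :
    √(d * H * K) + 1 / √(H * K) * H * K ≤ 2 * √(d * M * B * K) := by
  have hHK : (H * K : ℝ) ≤ d * H * K := by
    rw [mul_assoc]; exact le_mul_of_one_le_left (by positivity) hd
  have hHM : (H : ℝ) ≤ M * B :=
    hM.trans (le_mul_of_one_le_right ((Nat.cast_nonneg H).trans hM) hB)
  have hdHK : d * H * K ≤ d * M * B * K := by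
    have := mul_le_mul_of_nonneg_right (mul_le_mul_of_nonneg_left hHM (by linarith : 0 ≤ d))
      (Nat.cast_nonneg K)
    linarith
  have hεHK : 1 / √(H * K) * H * K = √(H * K) := by
    rw [mul_assoc, one_div_mul_eq_div, Real.div_sqrt]
  rw [hεHK]
  linarith [Real.sqrt_le_sqrt hdHK, Real.sqrt_le_sqrt (hHK.trans hdHK)]

theorem stmt2_general (K H : ℕ) (hK : 0 < K) (hH : 0 < H)
    (c1 c2 d B M : ℝ) (hc1 : 0 < c1) (hc2 : 0 < c2)
    (hd : 1 ≤ d) (hB : 1 ≤ B) (hM : (H : ℝ) ≤ M)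
    (η eps : ℝ) (hη : η = Real.sqrt (d / (M * B * K)))
    (heps : eps = 1 / Real.sqrt (H * K))
    (a b a' b' Δ Δ' : ℕ → ℝ) (ef eg : ℕ → ℕ → ℕ → ℝ)
    (h1 : ∑ k ∈ Icc 1 K, a k ≤ η * ∑ k ∈ Icc 1 K, Δ k)
    (h2 : ∀ k ∈ Icc 1 K,
      Δ k ≤ -c1 * ∑ h ∈ Icc 1 H, ∑ s ∈ Icc 1 (k - 1), ef k h s + c1 * B * M)
    (h3 : ∀ ζ : ℝ, 0 < ζ →
      ∑ k ∈ Icc 1 K, b k ≤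
        ζ / 2 * ∑ k ∈ Icc 1 K, ∑ h ∈ Icc 1 H, ∑ s ∈ Icc 1 (k - 1), ef k h s
        + d / (2 * ζ) + Real.sqrt (d * H * K) + eps * H * K)
    (h4 : ∑ k ∈ Icc 1 K, a' k ≤ η * ∑ k ∈ Icc 1 K, Δ' k)
    (h5 : ∀ k ∈ Icc 1 K,
      Δ' k ≤ -c2 * ∑ h ∈ Icc 1 H, ∑ s ∈ Icc 1 (k - 1), eg k h s + c2 * B * M)
    (h6 : ∀ ζ : ℝ, 0 < ζ →
      ∑ k ∈ Icc 1 K, b' k ≤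
        ζ / 2 * ∑ k ∈ Icc 1 K, ∑ h ∈ Icc 1 H, ∑ s ∈ Icc 1 (k - 1), eg k h s
        + d / (2 * ζ) + Real.sqrt (d * H * K) + eps * H * K) :
    ∑ k ∈ Icc 1 K, (a k + b k + a' k + b' k) ≤
      (c1 + c2 + 1 / (4 * c1) + 1 / (4 * c2) + 4) * Real.sqrt (d * M * B * K) := by
  have hQ : 0 < M * B * K := by
    have hM0 : (0 : ℝ) < M := (Nat.cast_pos.mpr hH).trans_le hM
    have hK0 : (0 : ℝ) < K := Nat.cast_pos.mpr hK
    have hB0 : 0 < B := by linarith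
    positivity
  have hηpos : 0 < η := by rw [hη]; exact Real.sqrt_pos.mpr (by positivity)
  have hηQ : η * (B * M * #(Icc 1 K)) = √(d * M * B * K) := by
    rw [Nat.card_Icc, Nat.add_sub_cancel, hη, mul_comm B M, Real.sqrt_div_mul_self (by linarith)]
    ring_nf
  have hdη : d / η = √(d * M * B * K) := by
    rw [hη, Real.div_sqrt_div (by linarith), mul_assoc d, mul_assoc d]
  set P := √(d * M * B * K)
  have hmax := sum_add_le_of_le_mul_sum_of_forall_le _ a b Δ _ (L := B * M) hηpos hc1 h1
    (fun k hk => (h2 k hk).trans_eq (by ring)) (fun ζ hζ => (h3 ζ hζ).trans_eq (add_assoc _ _ _))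
  have hmin := sum_add_le_of_le_mul_sum_of_forall_le _ a' b' Δ' _ (L := B * M) hηpos hc2 h4
    (fun k hk => (h5 k hk).trans_eq (by ring)) (fun ζ hζ => (h6 ζ hζ).trans_eq (add_assoc _ _ _))
  rw [hηQ, hdη, heps] at hmax hmin
  have hresidual := sqrt_mul_add_one_div_sqrt_mul_le (K := K) hd hB hM
  calc ∑ k ∈ Icc 1 K, (a k + b k + a' k + b' k)
      = ∑ k ∈ Icc 1 K, (a k + b k) + ∑ k ∈ Icc 1 K, (a' k + b' k) := by
        rw [← sum_add_distrib]; exact sum_congr rfl fun _ _ => by ring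
    _ ≤ c1 * P + P / (4 * c1) + (c2 * P + P / (4 * c2)) + 2 * (2 * P) := by linarith
    _ = (c1 + c2 + 1 / (4 * c1) + 1 / (4 * c2) + 4) * P := by ring

/-- Theorem 6.1 of the paper (online regret of MEX-MG), deterministic form. -/
theorem stmt2 (K H : ℕ) (hK : 0 < K) (hH : 0 < H)
    (c1 c2 d B M : ℝ) (hc1 : 0 < c1) (hc2 : 0 < c2)
    (hd : 1 ≤ d) (hB : 1 ≤ B) (hM : (H : ℝ) ≤ M)
    (η eps : ℝ) (hη : η = Real.sqrt (d / (M * B * K)))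
    (heps : eps = 1 / Real.sqrt (H * K))
    (a b a' b' Δ Δ' : ℕ → ℝ) (ef eg : ℕ → ℕ → ℕ → ℝ)
    (hef : ∀ k ∈ Icc 1 K, ∀ h ∈ Icc 1 H, ∀ s ∈ Icc 1 (k - 1), 0 ≤ ef k h s)
    (heg : ∀ k ∈ Icc 1 K, ∀ h ∈ Icc 1 H, ∀ s ∈ Icc 1 (k - 1), 0 ≤ eg k h s)
    (h1 : ∑ k ∈ Icc 1 K, a k ≤ η * ∑ k ∈ Icc 1 K, Δ k)
    (h2 : ∀ k ∈ Icc 1 K,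
      Δ k ≤ -c1 * ∑ h ∈ Icc 1 H, ∑ s ∈ Icc 1 (k - 1), ef k h s + c1 * B * M)
    (h3 : ∀ ζ : ℝ, 0 < ζ →
      ∑ k ∈ Icc 1 K, b k ≤
        ζ / 2 * ∑ k ∈ Icc 1 K, ∑ h ∈ Icc 1 H, ∑ s ∈ Icc 1 (k - 1), ef k h s
        + d / (2 * ζ) + Real.sqrt (d * H * K) + eps * H * K)
    (h4 : ∑ k ∈ Icc 1 K, a' k ≤ η * ∑ k ∈ Icc 1 K, Δ' k)
    (h5 : ∀ k ∈ Icc 1 K,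
      Δ' k ≤ -c2 * ∑ h ∈ Icc 1 H, ∑ s ∈ Icc 1 (k - 1), eg k h s + c2 * B * M)
    (h6 : ∀ ζ : ℝ, 0 < ζ →
      ∑ k ∈ Icc 1 K, b' k ≤
        ζ / 2 * ∑ k ∈ Icc 1 K, ∑ h ∈ Icc 1 H, ∑ s ∈ Icc 1 (k - 1), eg k h s
        + d / (2 * ζ) + Real.sqrt (d * H * K) + eps * H * K) :
    ∑ k ∈ Icc 1 K, (a k + b k + a' k + b' k) ≤
      (c1 + c2 + 1 / (4 * c1) + 1 / (4 * c2) + 4) * Real.sqrt (d * M * B * K) :=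
  stmt2_general K H hK hH c1 c2 d B M hc1 hc2 hd hB hM η eps hη heps a b a' b' Δ Δ' ef eg h1 h2 h3
    h4 h5 h6
end

section
/- Let d, K, H be positive integers and let B_W > 0, B_X > 0, eps > 0, eta > 0 be real numbers. For each h in {1,...,H} and k in {1,...,K}, let w_{h,k} and x_{h,k} be vectors in R^d with Euclidean norms ||w_{h,k}|| <= B_W and ||x_{h,k}|| <= B_X, and let ell(k,h,s) be real numbers satisfying <w_{h,k}, x_{h,s}>^2 <= ell(k,h,s) for all s in {1,...,k-1}. Set dtilde = d * log(1 + K * B_X^2 / (d * eps)). Then sum_{k=1}^K sum_{h=1}^H min{1, |<w_{h,k}, x_{h,k}>|} <= eta * sum_{k=1}^K sum_{h=1}^H sum_{s=1}^{k-1} ell(k,h,s) + H * dtilde/(2*eta) + H * min{K, 2*dtilde} + H*K*B_W*sqrt(eps). -/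
/-!
Fix a step `h` and put `Σₖ = ε I + ∑_{s<k} xₛ xₛᵀ`, `qₖ = xₖᵀ Σₖ⁻¹ xₖ`. When `qₖ ≥ 1` the summand
is at most `1`. Otherwise Cauchy–Schwarz in the geometry of `Σₖ` gives
`|⟪wₖ, xₖ⟫| ≤ √(wₖᵀ Σₖ wₖ) √qₖ ≤ (B_W √ε + √(∑_{s<k} ℓ)) √qₖ`, and AM–GM splits the second product
into `η ∑_{s<k} ℓ + qₖ / (4η)`. By the matrix determinant lemma `det Σ_{K+1} = εᵈ ∏ₖ (1 + qₖ)`,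
while AM–GM on the eigenvalues bounds `det Σ_{K+1}` by `(ε + K B_X² / d)ᵈ`; hence
`∑ₖ min 1 qₖ ≤ 2 ∑ₖ log (1 + qₖ) ≤ 2 d̃`, which controls both the number of steps with `qₖ ≥ 1`
and the sum of the `qₖ / (4η)`.
-/

open Finset Matrix

namespace Matrix

variable {n : Type*} [Fintype n] [DecidableEq n]

theorem PosSemidef.det_le_trace_div_card_pow {M : Matrix n n ℝ} (hM : M.PosSemidef) :
    M.det ≤ (M.trace / Fintype.card n) ^ Fintype.card n := by
  rcases (Fintype.card n).eq_zero_or_pos with hn | hn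
  · have := Fintype.card_eq_zero_iff.mp hn
    simp
  have hA := hM.isHermitian
  have hev : ∀ i ∈ univ, 0 ≤ hA.eigenvalues i := fun i _ => hM.eigenvalues_nonneg i
  have hn' : (0 : ℝ) < ∑ _i : n, (1 : ℝ) := by simpa using hn
  have amgm := Real.geom_mean_le_arith_mean univ (fun _ => 1) hA.eigenvalues
    (fun _ _ => zero_le_one) hn' hev
  simp only [Real.rpow_one, one_mul, sum_const, card_univ, nsmul_eq_mul, mul_one] at amgm
  rw [hA.det_eq_prod_eigenvalues, hA.trace_eq_sum_eigenvalues]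
  simp only [RCLike.ofReal_real_eq_id, id]
  calc ∏ i, hA.eigenvalues i
      = ((∏ i, hA.eigenvalues i) ^ (Fintype.card n : ℝ)⁻¹) ^ Fintype.card n := by
        rw [← Real.rpow_natCast, ← Real.rpow_mul (prod_nonneg hev),
          inv_mul_cancel₀ (by positivity), Real.rpow_one]
    _ ≤ _ := pow_le_pow_left₀ (Real.rpow_nonneg (prod_nonneg hev) _) amgm _

theorem PosDef.sq_dotProduct_le {M : Matrix n n ℝ} (hM : M.PosDef) (v w : n → ℝ) :
    (v ⬝ᵥ w) ^ 2 ≤ (v ⬝ᵥ M *ᵥ v) * (w ⬝ᵥ M⁻¹ *ᵥ w) := by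
  have hMM : M *ᵥ M⁻¹ *ᵥ w = w := by
    rw [mulVec_mulVec, mul_nonsing_inv _ hM.det_pos.ne'.isUnit, one_mulVec]
  have hsymm : (M⁻¹ *ᵥ w) ⬝ᵥ M *ᵥ v = w ⬝ᵥ v := by
    rw [dotProduct_mulVec, ← mulVec_transpose, ← conjTranspose_eq_transpose_of_trivial,
      hM.isHermitian.eq, hMM]
  have hquad : ∀ t : ℝ, 0 ≤ (v ⬝ᵥ M *ᵥ v) * (t * t) + (-2 * (v ⬝ᵥ w)) * t
      + w ⬝ᵥ M⁻¹ *ᵥ w := fun t => by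
    have := hM.posSemidef.dotProduct_mulVec_nonneg (t • v - M⁻¹ *ᵥ w)
    simp only [star_trivial, mulVec_sub, mulVec_smul, hMM, sub_dotProduct, dotProduct_sub,
      smul_dotProduct, dotProduct_smul, smul_eq_mul] at this
    rw [hsymm, dotProduct_comm (M⁻¹ *ᵥ w) w, dotProduct_comm w v] at this
    linarith
  have := discrim_le_zero hquad
  unfold discrim at this
  nlinarith

theorem det_add_vecMulVec {A : Matrix n n ℝ} (hA : IsUnit A.det) (u v : n → ℝ) :
    (A + vecMulVec u v).det = A.det * (1 + v ⬝ᵥ A⁻¹ *ᵥ u) := by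
  rw [vecMulVec_eq Unit, det_add_replicateCol_mul_replicateRow hA, det_unique (n := Unit),
    add_apply, one_apply_eq, ← replicateRow_vecMul, replicateRow_mul_replicateCol_apply,
    ← dotProduct_mulVec]

end Matrix

theorem min_one_le_two_mul_log_one_add {u : ℝ} (hu : 0 ≤ u) : min 1 u ≤ 2 * Real.log (1 + u) := by
  have h := Real.le_log_one_add_of_nonneg hu
  have : min 1 u ≤ 2 * (2 * u / (u + 2)) := by
    rw [← mul_div_assoc, le_div_iff₀ (by positivity)]
    rcases le_total 1 u with h1 | h1
    · rw [min_eq_left h1]; linarith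
    · rw [min_eq_right h1]; nlinarith
  linarith

theorem min_one_abs_le_of_sq_le_mul {a b q c L η : ℝ} (hη : 0 < η) (hq : 0 ≤ q) (hc : 0 ≤ c)
    (hL : 0 ≤ L) (hab : a ^ 2 ≤ b * q) (hb : b ≤ c ^ 2 + L) :
    min 1 |a| ≤ (if 1 ≤ q then 1 else 0) + c + η * L + min 1 q / (4 * η) := by
  split_ifs with hq1
  · have : 0 ≤ η * L + min 1 q / (4 * η) := by positivity
    linarith [min_le_left 1 |a|]
  have hq1 : q ≤ 1 := (not_le.mp hq1).le
  rw [min_eq_right hq1, zero_add, add_assoc]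
  refine (min_le_right _ _).trans (abs_le_of_sq_le_sq ?_ (by positivity))
  have hamgm : L * q ≤ (η * L + q / (4 * η)) ^ 2 := by
    have : η * L * (q / (4 * η)) = L * q / 4 := by field_simp
    nlinarith [sq_nonneg (η * L - q / (4 * η))]
  calc a ^ 2 ≤ (c ^ 2 + L) * q := hab.trans (by gcongr)
    _ ≤ c ^ 2 + (η * L + q / (4 * η)) ^ 2 := by nlinarith [mul_le_of_le_one_right (sq_nonneg c) hq1]
    _ ≤ (c + (η * L + q / (4 * η))) ^ 2 := by nlinarith [show 0 ≤ η * L + q / (4 * η) by positivity]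

section EllipticalPotential

variable {n : Type*} [DecidableEq n] {eps : ℝ} (x : ℕ → n → ℝ)

variable (eps) in
/-- `regularizedGram eps x m` is the paper's `Σ_{m+1}`, built from `x 1, …, x m`; accordingly
`invGramNormSq eps x k` is the squared `Σₖ⁻¹`-norm of `x k`. -/
def regularizedGram (m : ℕ) : Matrix n n ℝ :=
  eps • 1 + ∑ s ∈ Icc 1 m, vecMulVec (x s) (x s)

theorem regularizedGram_succ (m : ℕ) :
    regularizedGram eps x (m + 1) =
      regularizedGram eps x m + vecMulVec (x (m + 1)) (x (m + 1)) := by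
  rw [regularizedGram, sum_Icc_succ_top (Nat.le_add_left 1 m), ← add_assoc, regularizedGram]

variable [Fintype n]

variable (eps) in
noncomputable def invGramNormSq (k : ℕ) : ℝ :=
  x k ⬝ᵥ (regularizedGram eps x (k - 1))⁻¹ *ᵥ x k

theorem regularizedGram_posDef (heps : 0 < eps) (m : ℕ) : (regularizedGram eps x m).PosDef :=
  (PosDef.one.smul heps).add_posSemidef <| posSemidef_sum _ fun s _ => by
    simpa using posSemidef_vecMulVec_self_star (x s)

theorem invGramNormSq_nonneg (heps : 0 < eps) (k : ℕ) : 0 ≤ invGramNormSq eps x k := by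
  have := (regularizedGram_posDef x heps (k - 1)).inv.posSemidef.dotProduct_mulVec_nonneg (x k)
  simpa [invGramNormSq] using this

theorem det_regularizedGram (heps : 0 < eps) (m : ℕ) :
    (regularizedGram eps x m).det =
      eps ^ Fintype.card n * ∏ k ∈ Icc 1 m, (1 + invGramNormSq eps x k) := by
  induction m with
  | zero => simp [regularizedGram]
  | succ m ih =>
    rw [regularizedGram_succ,
      det_add_vecMulVec (regularizedGram_posDef x heps m).det_pos.ne'.isUnit, ih, prod_Icc_succ_top (Nat.le_add_left 1 m), mul_assoc, invGramNormSq, Nat.add_sub_cancel]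

theorem dotProduct_regularizedGram_mulVec (m : ℕ) (v : n → ℝ) :
    v ⬝ᵥ regularizedGram eps x m *ᵥ v = eps * (v ⬝ᵥ v) + ∑ s ∈ Icc 1 m, (x s ⬝ᵥ v) ^ 2 := by
  rw [regularizedGram, add_mulVec, smul_mulVec, one_mulVec, sum_mulVec, dotProduct_add,
    dotProduct_smul, smul_eq_mul, dotProduct_sum]
  congr 1
  refine sum_congr rfl fun s _ => ?_
  rw [vecMulVec_mulVec, op_smul_eq_smul, dotProduct_smul, smul_eq_mul, dotProduct_comm v, sq]

theorem trace_regularizedGram (m : ℕ) :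
    (regularizedGram eps x m).trace = eps * Fintype.card n + ∑ s ∈ Icc 1 m, x s ⬝ᵥ x s := by
  simp [regularizedGram, trace_sum, trace_vecMulVec]

theorem sum_log_one_add_invGramNormSq_le (heps : 0 < eps) {K : ℕ} {B : ℝ}
    (hx : ∀ s ∈ Icc 1 K, x s ⬝ᵥ x s ≤ B) :
    ∑ k ∈ Icc 1 K, Real.log (1 + invGramNormSq eps x k) ≤
      Fintype.card n * Real.log (1 + K * B / (Fintype.card n * eps)) := by
  set c : ℝ := (Fintype.card n : ℝ)
  have hM := regularizedGram_posDef x heps K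
  have hq : ∀ k ∈ Icc 1 K, 0 < 1 + invGramNormSq eps x k := fun k _ => by
    linarith [invGramNormSq_nonneg x heps k]
  have hlog_det : Real.log (regularizedGram eps x K).det =
      c * Real.log eps + ∑ k ∈ Icc 1 K, Real.log (1 + invGramNormSq eps x k) := by
    rw [det_regularizedGram x heps, Real.log_mul (by positivity) (prod_pos hq).ne', Real.log_pow,
      Real.log_prod fun k hk => (hq k hk).ne']
  have hdet_le : Real.log (regularizedGram eps x K).det ≤
      c * Real.log ((regularizedGram eps x K).trace / c) := by
    simpa [Real.log_pow] using Real.log_le_log hM.det_pos hM.posSemidef.det_le_trace_div_card_pow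
  have htrace : (regularizedGram eps x K).trace ≤ c * eps + K * B := by
    rw [trace_regularizedGram, mul_comm eps]
    have := sum_le_sum hx
    simp only [sum_const, Nat.card_Icc, add_tsub_cancel_right, nsmul_eq_mul] at this
    linarith
  suffices c * Real.log ((regularizedGram eps x K).trace / c) ≤
      c * (Real.log eps + Real.log (1 + K * B / (c * eps))) by nlinarith
  rcases (Fintype.card n).eq_zero_or_pos with hn | hn
  · simp [c, hn]
  have hc : 0 < c := Nat.cast_pos.mpr hn
  have : Nonempty n := Fintype.card_pos_iff.mp hn
  have htrace_pos : 0 < (regularizedGram eps x K).trace / c := div_pos hM.trace_pos hc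
  have harg : eps * (1 + K * B / (c * eps)) = (c * eps + K * B) / c := by field_simp
  have harg_pos : 0 < eps * (1 + K * B / (c * eps)) := by
    rw [harg]
    exact htrace_pos.trans_le (div_le_div_of_nonneg_right htrace hc.le)
  gcongr
  rw [← Real.log_mul heps.ne' (pos_of_mul_pos_right harg_pos heps.le).ne', harg]
  exact Real.log_le_log htrace_pos (div_le_div_of_nonneg_right htrace hc.le)

theorem sum_min_one_invGramNormSq_le (heps : 0 < eps) {K : ℕ} {B : ℝ}
    (hx : ∀ s ∈ Icc 1 K, x s ⬝ᵥ x s ≤ B) :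
    ∑ k ∈ Icc 1 K, min 1 (invGramNormSq eps x k) ≤
      2 * (Fintype.card n * Real.log (1 + K * B / (Fintype.card n * eps))) := by
  calc ∑ k ∈ Icc 1 K, min 1 (invGramNormSq eps x k)
      ≤ ∑ k ∈ Icc 1 K, 2 * Real.log (1 + invGramNormSq eps x k) :=
        sum_le_sum fun k _ => min_one_le_two_mul_log_one_add (invGramNormSq_nonneg x heps k)
    _ ≤ _ := by
        rw [← mul_sum]
        exact mul_le_mul_of_nonneg_left (sum_log_one_add_invGramNormSq_le x heps hx) zero_le_two

theorem min_one_abs_dotProduct_le (heps : 0 < eps) {η BW L : ℝ} (hη : 0 < η) (hBW : 0 ≤ BW)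
    (k : ℕ) (v : n → ℝ) (hv : v ⬝ᵥ v ≤ BW ^ 2) (hL : ∑ s ∈ Icc 1 (k - 1), (x s ⬝ᵥ v) ^ 2 ≤ L) :
    min 1 |v ⬝ᵥ x k| ≤ (if 1 ≤ invGramNormSq eps x k then 1 else 0) + BW * Real.sqrt eps
      + η * L + min 1 (invGramNormSq eps x k) / (4 * η) := by
  refine min_one_abs_le_of_sq_le_mul hη (invGramNormSq_nonneg x heps k) (by positivity)
    ((sum_nonneg fun _ _ => sq_nonneg _).trans hL)
    ((regularizedGram_posDef x heps (k - 1)).sq_dotProduct_le v (x k)) ?_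
  rw [dotProduct_regularizedGram_mulVec, mul_pow, Real.sq_sqrt heps.le, mul_comm eps]
  gcongr

end EllipticalPotential

open scoped RealInnerProductSpace

theorem EuclideanSpace.real_inner_eq_dotProduct {n : Type*} [Fintype n] (a b : EuclideanSpace ℝ n) :
    ⟪a, b⟫ = a.ofLp ⬝ᵥ b.ofLp := by
  rw [EuclideanSpace.inner_eq_star_dotProduct, star_trivial, dotProduct_comm]

theorem sum_min_one_abs_inner_le {n : Type*} [Fintype n] [DecidableEq n] {K : ℕ}
    {BW BX eps η : ℝ} (heps : 0 < eps) (hη : 0 < η) (w x : ℕ → EuclideanSpace ℝ n)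
    (hw : ∀ k ∈ Icc 1 K, ‖w k‖ ≤ BW) (hx : ∀ k ∈ Icc 1 K, ‖x k‖ ≤ BX)
    (L : ℕ → ℕ → ℝ) (hL : ∀ k ∈ Icc 1 K, ∀ s ∈ Icc 1 (k - 1), ⟪w k, x s⟫ ^ 2 ≤ L k s)
    (dt : ℝ) (hdt : dt = Fintype.card n * Real.log (1 + K * BX ^ 2 / (Fintype.card n * eps))) :
    ∑ k ∈ Icc 1 K, min 1 |⟪w k, x k⟫| ≤
      η * ∑ k ∈ Icc 1 K, ∑ s ∈ Icc 1 (k - 1), L k s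
      + dt / (2 * η) + min (K : ℝ) (2 * dt) + K * BW * Real.sqrt eps := by
  set X : ℕ → n → ℝ := fun k => (x k).ofLp
  set q : ℕ → ℝ := invGramNormSq eps X
  have hq : ∀ k, 0 ≤ q k := invGramNormSq_nonneg X heps
  have hnorm : ∀ a : EuclideanSpace ℝ n, a.ofLp ⬝ᵥ a.ofLp = ‖a‖ ^ 2 := fun a => by
    rw [← EuclideanSpace.real_inner_eq_dotProduct, real_inner_self_eq_norm_sq]
  have hpot : ∑ k ∈ Icc 1 K, min 1 (q k) ≤ 2 * dt := by
    refine hdt ▸ sum_min_one_invGramNormSq_le X heps fun k hk => ?_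
    rw [hnorm]
    exact pow_le_pow_left₀ (norm_nonneg _) (hx k hk) 2
  have hstep : ∀ k ∈ Icc 1 K, min 1 |⟪w k, x k⟫| ≤ (if 1 ≤ q k then 1 else 0)
      + BW * Real.sqrt eps + η * ∑ s ∈ Icc 1 (k - 1), L k s + min 1 (q k) / (4 * η) := by
    intro k hk
    rw [EuclideanSpace.real_inner_eq_dotProduct]
    refine min_one_abs_dotProduct_le X heps hη ((norm_nonneg _).trans (hw k hk)) k _
      (hnorm (w k) ▸ pow_le_pow_left₀ (norm_nonneg _) (hw k hk) 2) (sum_le_sum fun s hs => ?_)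
    rw [dotProduct_comm, ← EuclideanSpace.real_inner_eq_dotProduct]
    exact hL k hk s hs
  have hind : ∑ k ∈ Icc 1 K, (if 1 ≤ q k then (1 : ℝ) else 0) ≤ min (K : ℝ) (2 * dt) := by
    refine le_min ?_ (le_trans (sum_le_sum fun k _ => ?_) hpot)
    · simpa using sum_le_card_nsmul (Icc 1 K) (fun k => if 1 ≤ q k then (1 : ℝ) else 0) 1
        fun k _ => by split_ifs <;> norm_num
    · split_ifs with h
      · exact (min_eq_left h).ge
      · exact le_min zero_le_one (hq k)
  calc ∑ k ∈ Icc 1 K, min 1 |⟪w k, x k⟫|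
      ≤ ∑ k ∈ Icc 1 K, ((if 1 ≤ q k then 1 else 0)
        + BW * Real.sqrt eps + η * ∑ s ∈ Icc 1 (k - 1), L k s + min 1 (q k) / (4 * η)) :=
        sum_le_sum hstep
    _ = η * ∑ k ∈ Icc 1 K, ∑ s ∈ Icc 1 (k - 1), L k s
        + (∑ k ∈ Icc 1 K, min 1 (q k)) / (4 * η)
        + ∑ k ∈ Icc 1 K, (if 1 ≤ q k then (1 : ℝ) else 0) + K * BW * Real.sqrt eps := by
        simp only [sum_add_distrib, sum_const, Nat.card_Icc, ← mul_sum, ← sum_div, nsmul_eq_mul]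
        push_cast
        ring
    _ ≤ _ := by
        have : (∑ k ∈ Icc 1 K, min 1 (q k)) / (4 * η) ≤ dt / (2 * η) := by
          rw [div_le_div_iff₀ (by positivity) (by positivity)]
          nlinarith
        linarith

theorem stmt4_general (d K H : ℕ)
    (BW BX eps η : ℝ) (heps : 0 < eps) (hη : 0 < η)
    (w x : ℕ → ℕ → EuclideanSpace ℝ (Fin d))
    (hw : ∀ h ∈ Icc 1 H, ∀ k ∈ Icc 1 K, ‖w h k‖ ≤ BW)
    (hx : ∀ h ∈ Icc 1 H, ∀ k ∈ Icc 1 K, ‖x h k‖ ≤ BX)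
    (ℓ : ℕ → ℕ → ℕ → ℝ)
    (hℓ : ∀ k ∈ Icc 1 K, ∀ h ∈ Icc 1 H, ∀ s ∈ Icc 1 (k - 1),
      ⟪w h k, x h s⟫ ^ 2 ≤ ℓ k h s)
    (dt : ℝ) (hdt : dt = d * Real.log (1 + K * BX ^ 2 / (d * eps))) :
    ∑ k ∈ Icc 1 K, ∑ h ∈ Icc 1 H, min 1 |⟪w h k, x h k⟫| ≤
      η * ∑ k ∈ Icc 1 K, ∑ h ∈ Icc 1 H, ∑ s ∈ Icc 1 (k - 1), ℓ k h s
      + H * dt / (2 * η) + H * min (K : ℝ) (2 * dt)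
      + H * K * BW * Real.sqrt eps := by
  have hstep (h : ℕ) (hh : h ∈ Icc 1 H) := sum_min_one_abs_inner_le heps hη (w h) (x h)
    (hw h hh) (hx h hh) (fun k s => ℓ k h s) (fun k hk => hℓ k hk h hh) dt
    (by rwa [Fintype.card_fin])
  calc ∑ k ∈ Icc 1 K, ∑ h ∈ Icc 1 H, min 1 |⟪w h k, x h k⟫|
      = ∑ h ∈ Icc 1 H, ∑ k ∈ Icc 1 K, min 1 |⟪w h k, x h k⟫| := sum_comm
    _ ≤ ∑ h ∈ Icc 1 H, (η * ∑ k ∈ Icc 1 K, ∑ s ∈ Icc 1 (k - 1), ℓ k h s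
        + dt / (2 * η) + min (K : ℝ) (2 * dt) + K * BW * Real.sqrt eps) := sum_le_sum hstep
    _ = _ := by
        rw [sum_comm (s := Icc 1 K) (t := Icc 1 H)]
        simp only [sum_add_distrib, sum_const, Nat.card_Icc, ← mul_sum, nsmul_eq_mul]
        push_cast
        ring

/-- Bilinear decoupling argument of Proposition B.1 of the paper. -/
theorem stmt4 (d K H : ℕ) (hd : 0 < d) (hK : 0 < K) (hH : 0 < H)
    (BW BX eps η : ℝ) (hBW : 0 < BW) (hBX : 0 < BX) (heps : 0 < eps) (hη : 0 < η)
    (w x : ℕ → ℕ → EuclideanSpace ℝ (Fin d))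
    (hw : ∀ h ∈ Icc 1 H, ∀ k ∈ Icc 1 K, ‖w h k‖ ≤ BW)
    (hx : ∀ h ∈ Icc 1 H, ∀ k ∈ Icc 1 K, ‖x h k‖ ≤ BX)
    (ℓ : ℕ → ℕ → ℕ → ℝ)
    (hℓ : ∀ k ∈ Icc 1 K, ∀ h ∈ Icc 1 H, ∀ s ∈ Icc 1 (k - 1),
      ⟪w h k, x h s⟫ ^ 2 ≤ ℓ k h s)
    (dt : ℝ) (hdt : dt = d * Real.log (1 + K * BX ^ 2 / (d * eps))) :
    ∑ k ∈ Icc 1 K, ∑ h ∈ Icc 1 H, min 1 |⟪w h k, x h k⟫| ≤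
      η * ∑ k ∈ Icc 1 K, ∑ h ∈ Icc 1 H, ∑ s ∈ Icc 1 (k - 1), ℓ k h s
      + H * dt / (2 * η) + H * min (K : ℝ) (2 * dt)
      + H * K * BW * Real.sqrt eps :=
  stmt4_general d K H BW BX eps η heps hη w x hw hx ℓ hℓ dt hdt
end

section
/- Let (Omega, F, P) be a probability space equipped with a filtration (F_t) for t in {0, 1, ..., T}, and let X_1, ..., X_T be real-valued random variables such that each X_t is F_t-measurable and exp(-X_t) is integrable. Then for any delta in (0,1), with probability at least 1 - delta the following holds simultaneously for all t in {1, ..., T}: - sum_{s=1}^t X_s <= sum_{s=1}^t log E[ exp(-X_s) | F_{s-1} ] + log(1/delta), where E[ . | F_{s-1} ] denotes conditional expectation given F_{s-1}. -/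
/-!
With `E_s = E[exp (-X_s) | ℱ_{s-1}]`, the process
`M_t = exp (∑_{s ≤ t} (-X_s - log E_s))` satisfies `M_0 = 1` and is a supermartingale, since each
factor `exp (-X_s) / E_s` has conditional expectation at most one given `ℱ_{s-1}`. Ville's maximal
inequality bounds the probability that `M_t ≥ 1/δ` for some `t ≤ T` by `δ`, and `M_t < 1/δ` is the
claimed bound after taking logarithms. Working with lower Lebesgue integrals of `M_t` avoids
having to prove that `M_t` is integrable.
-/

open MeasureTheory Finset
open scoped ENNReal

theorem lintegral_mul_ofReal_condExp {Ω : Type*} {m m0 : MeasurableSpace Ω} (hm : m ≤ m0)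
    (μ : Measure Ω) [IsFiniteMeasure μ] {h : Ω → ℝ} (hh : Integrable h μ) (hh0 : 0 ≤ h)
    (hmh : Measurable h) {g : Ω → ℝ≥0∞} (hg : Measurable[m] g) :
    ∫⁻ ω, g ω * ENNReal.ofReal (h ω) ∂μ = ∫⁻ ω, g ω * ENNReal.ofReal ((μ[h|m]) ω) ∂μ := by
  have hmc : Measurable (μ[h|m]) := stronglyMeasurable_condExp.measurable.mono hm le_rfl
  have hdens : (μ.withDensity fun ω => ENNReal.ofReal (h ω)).trim hm
      = (μ.withDensity fun ω => ENNReal.ofReal ((μ[h|m]) ω)).trim hm := by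
    refine @Measure.ext Ω m _ _ fun s hs => ?_
    rw [trim_measurableSet_eq hm hs, trim_measurableSet_eq hm hs,
      withDensity_apply _ (hm s hs), withDensity_apply _ (hm s hs),
      ← ofReal_integral_eq_lintegral_ofReal hh.restrict (.of_forall hh0),
      ← ofReal_integral_eq_lintegral_ofReal integrable_condExp.restrict
        (ae_restrict_of_ae (condExp_nonneg (.of_forall hh0))),
      setIntegral_condExp hm hh hs]
  have hwd {f : Ω → ℝ≥0∞} (hf : Measurable f) :
      ∫⁻ ω, g ω * f ω ∂μ = ∫⁻ ω, g ω ∂((μ.withDensity f).trim hm) := by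
    rw [lintegral_trim hm hg, lintegral_withDensity_eq_lintegral_mul _ hf (hg.mono hm le_rfl)]
    simp only [Pi.mul_apply, mul_comm]
  rw [hwd hmh.ennreal_ofReal, hwd hmc.ennreal_ofReal, hdens]

theorem lintegral_mul_ofReal_exp_sub_log_condExp_le {Ω : Type*} {m m0 : MeasurableSpace Ω}
    (hm : m ≤ m0) (μ : Measure Ω) [IsFiniteMeasure μ] {X : Ω → ℝ} (hX : Measurable X)
    (hint : Integrable (fun ω => Real.exp (-X ω)) μ) {g : Ω → ℝ≥0∞} (hg : Measurable[m] g) :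
    ∫⁻ ω, g ω * ENNReal.ofReal
      (Real.exp (-X ω - Real.log ((μ[fun ω' => Real.exp (-X ω')|m]) ω))) ∂μ
      ≤ ∫⁻ ω, g ω ∂μ := by
  set E := μ[fun ω' => Real.exp (-X ω')|m]
  have hE : Measurable[m] E := stronglyMeasurable_condExp.measurable
  have hsplit (ω : Ω) : ENNReal.ofReal (Real.exp (-X ω - Real.log (E ω)))
      = ENNReal.ofReal (Real.exp (-Real.log (E ω))) * ENNReal.ofReal (Real.exp (-X ω)) := by
    rw [← ENNReal.ofReal_mul (Real.exp_pos _).le, ← Real.exp_add, neg_add_eq_sub]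
  simp_rw [hsplit, ← mul_assoc]
  rw [lintegral_mul_ofReal_condExp hm μ hint (fun ω => (Real.exp_pos _).le) (by fun_prop)
    (g := fun ω => g ω * ENNReal.ofReal (Real.exp (-Real.log (E ω)))) (by fun_prop)]
  refine lintegral_mono fun ω => ?_
  rw [mul_assoc]
  refine mul_le_of_le_one_right' ?_
  change _ * ENNReal.ofReal (E ω) ≤ 1
  -- Where `E ω ≤ 0`, the junk value of `Real.log` is harmless because `ofReal (E ω) = 0`.
  rcases le_or_gt (E ω) 0 with hE0 | hE0
  · simp [ENNReal.ofReal_of_nonpos hE0]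
  · rw [← ENNReal.ofReal_mul (Real.exp_pos _).le, Real.exp_neg, Real.exp_log hE0,
      inv_mul_cancel₀ hE0.ne', ENNReal.ofReal_one]

theorem mul_measure_inter_add_setLIntegral_le {Ω : Type*} {m0 : MeasurableSpace Ω}
    (μ : Measure Ω) {f : Ω → ℝ≥0∞} (hf : Measurable f) (s : Set Ω) (c : ℝ≥0∞) :
    c * μ (s ∩ {ω | c ≤ f ω}) + ∫⁻ ω in s ∩ {ω | f ω < c}, f ω ∂μ ≤ ∫⁻ ω in s, f ω ∂μ := by
  have hsdiff : s ∩ {ω | f ω < c} = s \ {ω | c ≤ f ω} := by ext; simp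
  rw [← lintegral_inter_add_sdiff f s (measurableSet_le measurable_const hf), hsdiff,
    ← setLIntegral_const]
  gcongr ?_ + _
  exact setLIntegral_mono hf fun ω hω => hω.2

theorem ville_ineq {Ω : Type*} {m0 : MeasurableSpace Ω} (μ : Measure Ω)
    (ℱ : Filtration ℕ m0) (M : ℕ → Ω → ℝ≥0∞) (T : ℕ)
    (hM : ∀ t ≤ T, Measurable[ℱ t] (M t))
    (hsuper : ∀ t < T, ∀ s, MeasurableSet[ℱ t] s →
      ∫⁻ ω in s, M (t + 1) ω ∂μ ≤ ∫⁻ ω in s, M t ω ∂μ)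
    (c : ℝ≥0∞) :
    c * μ {ω | ∃ t ≤ T, c ≤ M t ω} ≤ ∫⁻ ω, M 0 ω ∂μ := by
  let G : ℕ → Set Ω := fun n => {ω | ∀ t ≤ n, M t ω < c}
  have hG_zero : G 0 = {ω | M 0 ω < c} := by ext ω; simp [G]
  have hG_succ (n : ℕ) : G (n + 1) = G n ∩ {ω | M (n + 1) ω < c} := by
    ext ω; simp [G, Nat.le_succ_iff, or_imp, forall_and]
  have hG_meas (n : ℕ) (hn : n ≤ T) : MeasurableSet[ℱ n] (G n) := by
    induction n with
    | zero => rw [hG_zero]; exact measurableSet_lt (hM 0 hn) measurable_const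
    | succ n ih =>
      rw [hG_succ]
      exact .inter (ℱ.mono n.le_succ _ (ih (by omega)))
        (measurableSet_lt (hM _ hn) measurable_const)
  have hM_meas (n : ℕ) (hn : n ≤ T) : Measurable (M n) := (hM n hn).mono (ℱ.le n) le_rfl
  have key (n : ℕ) (hn : n ≤ T) : c * μ (G n)ᶜ + ∫⁻ ω in G n, M n ω ∂μ ≤ ∫⁻ ω, M 0 ω ∂μ := by
    induction n with
    | zero =>
      have hcompl : (G 0)ᶜ = {ω | c ≤ M 0 ω} := by ext ω; simp [G]
      rw [hcompl, hG_zero]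
      simpa using mul_measure_inter_add_setLIntegral_le μ (hM_meas 0 hn) Set.univ c
    | succ n ih =>
      have hcompl : (G (n + 1))ᶜ ⊆ (G n)ᶜ ∪ (G n ∩ {ω | c ≤ M (n + 1) ω}) := by
        rw [hG_succ]
        intro ω hω
        by_cases hωG : ω ∈ G n
        · exact .inr ⟨hωG, show c ≤ M (n + 1) ω from le_of_not_gt fun h => hω ⟨hωG, h⟩⟩
        · exact .inl hωG
      calc c * μ (G (n + 1))ᶜ + ∫⁻ ω in G (n + 1), M (n + 1) ω ∂μ
          ≤ c * μ (G n)ᶜ + (c * μ (G n ∩ {ω | c ≤ M (n + 1) ω})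
              + ∫⁻ ω in G n ∩ {ω | M (n + 1) ω < c}, M (n + 1) ω ∂μ) := by
            grw [measure_mono hcompl, measure_union_le, mul_add, hG_succ, add_assoc]
        _ ≤ c * μ (G n)ᶜ + ∫⁻ ω in G n, M (n + 1) ω ∂μ := by
            grw [mul_measure_inter_add_setLIntegral_le μ (hM_meas _ hn)]
        _ ≤ c * μ (G n)ᶜ + ∫⁻ ω in G n, M n ω ∂μ := by
            grw [hsuper n hn _ (hG_meas n (by omega))]
        _ ≤ ∫⁻ ω, M 0 ω ∂μ := ih (by omega)
  have hbad : {ω | ∃ t ≤ T, c ≤ M t ω} = (G T)ᶜ := by ext ω; simp [G]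
  rw [hbad]
  exact le_of_add_le_left (key T le_rfl)

theorem ofReal_one_sub_le_measure {Ω : Type*} {m0 : MeasurableSpace Ω} (μ : Measure Ω)
    [IsProbabilityMeasure μ] {δ : ℝ} (hδ : 0 ≤ δ) {s t : Set Ω} (ht : μ t ≤ ENNReal.ofReal δ)
    (hst : ∀ ω ∉ t, ω ∈ s) : ENNReal.ofReal (1 - δ) ≤ μ s := by
  have hcover : Set.univ ⊆ s ∪ t := fun ω _ => by
    by_cases hω : ω ∈ t
    · exact .inr hω
    · exact .inl (hst ω hω)
  calc ENNReal.ofReal (1 - δ) = 1 - ENNReal.ofReal δ := by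
        rw [ENNReal.ofReal_sub _ hδ, ENNReal.ofReal_one]
    _ ≤ 1 - μ t := tsub_le_tsub_left ht 1
    _ ≤ μ s := by
        rw [tsub_le_iff_right, ← measure_univ (μ := μ)]
        exact (measure_mono hcover).trans (measure_union_le s t)

noncomputable def expSupermartingale {Ω : Type*} {m0 : MeasurableSpace Ω} (μ : Measure Ω)
    (ℱ : Filtration ℕ m0) (X : ℕ → Ω → ℝ) (t : ℕ) (ω : Ω) : ℝ≥0∞ :=
  ENNReal.ofReal (Real.exp (∑ s ∈ Icc 1 t,
    (-X s ω - Real.log ((μ[fun ω' => Real.exp (-X s ω') | ℱ (s - 1)]) ω))))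

section expSupermartingale

variable {Ω : Type*} {m0 : MeasurableSpace Ω} (μ : Measure Ω) (ℱ : Filtration ℕ m0)
  (X : ℕ → Ω → ℝ)

@[simp]
theorem expSupermartingale_zero (ω : Ω) : expSupermartingale μ ℱ X 0 ω = 1 := by
  simp [expSupermartingale]

theorem expSupermartingale_succ (t : ℕ) (ω : Ω) :
    expSupermartingale μ ℱ X (t + 1) ω = expSupermartingale μ ℱ X t ω * ENNReal.ofReal
      (Real.exp (-X (t + 1) ω - Real.log ((μ[fun ω' => Real.exp (-X (t + 1) ω') | ℱ t]) ω))) := by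
  rw [expSupermartingale, expSupermartingale, sum_Icc_succ_top (by omega), Real.exp_add,
    ENNReal.ofReal_mul (Real.exp_pos _).le, Nat.add_sub_cancel]

variable {μ ℱ X}

theorem measurable_expSupermartingale {t : ℕ} (hX : ∀ s ∈ Icc 1 t, Measurable[ℱ s] (X s)) :
    Measurable[ℱ t] (expSupermartingale μ ℱ X t) := by
  refine (Real.measurable_exp.comp (Finset.measurable_sum _ fun s hs => ?_)).ennreal_ofReal
  have hst : s ≤ t := (mem_Icc.1 hs).2
  have hE : Measurable[ℱ (s - 1)] (μ[fun ω' => Real.exp (-X s ω') | ℱ (s - 1)]) :=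
    stronglyMeasurable_condExp.measurable
  exact ((hX s hs).mono (ℱ.mono hst) le_rfl).neg.sub
    (Real.measurable_log.comp (hE.mono (ℱ.mono (by omega)) le_rfl))

theorem setLIntegral_expSupermartingale_succ_le [IsFiniteMeasure μ] {t : ℕ}
    (hX : ∀ s ∈ Icc 1 t, Measurable[ℱ s] (X s)) (hXt : Measurable (X (t + 1)))
    (hint : Integrable (fun ω => Real.exp (-X (t + 1) ω)) μ) {s : Set Ω}
    (hs : MeasurableSet[ℱ t] s) :
    ∫⁻ ω in s, expSupermartingale μ ℱ X (t + 1) ω ∂μ ≤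
      ∫⁻ ω in s, expSupermartingale μ ℱ X t ω ∂μ := by
  rw [← lintegral_indicator (ℱ.le t _ hs), ← lintegral_indicator (ℱ.le t _ hs)]
  have hind : s.indicator (expSupermartingale μ ℱ X (t + 1)) = fun ω =>
      s.indicator (expSupermartingale μ ℱ X t) ω * ENNReal.ofReal
        (Real.exp (-X (t + 1) ω - Real.log ((μ[fun ω' => Real.exp (-X (t + 1) ω') | ℱ t]) ω))) := by
    ext ω
    by_cases hω : ω ∈ s <;> simp [hω, expSupermartingale_succ]
  rw [hind]
  exact lintegral_mul_ofReal_exp_sub_log_condExp_le (ℱ.le t) μ hXt hint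
    ((measurable_expSupermartingale hX).indicator hs)

theorem neg_sum_le_of_expSupermartingale_lt {t : ℕ} {ω : Ω} {c : ℝ}
    (hM : expSupermartingale μ ℱ X t ω < ENNReal.ofReal c) :
    -∑ s ∈ Icc 1 t, X s ω ≤
      ∑ s ∈ Icc 1 t, Real.log ((μ[fun ω' => Real.exp (-X s ω') | ℱ (s - 1)]) ω) + Real.log c := by
  have hc : 0 < c := ENNReal.ofReal_pos.1 (pos_of_gt hM)
  have hlt := Real.lt_log_iff_exp_lt hc |>.2 ((ENNReal.ofReal_lt_ofReal_iff hc).1 hM)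
  rw [sum_sub_distrib, sum_neg_distrib] at hlt
  linarith

end expSupermartingale

/-- Martingale exponential inequality (Lemma C.1 of the paper). -/
theorem stmt11 {Ω : Type*} {m0 : MeasurableSpace Ω} (μ : Measure Ω)
    [IsProbabilityMeasure μ]
    (T : ℕ) (ℱ : Filtration ℕ m0) (X : ℕ → Ω → ℝ)
    (hmeas : ∀ t ∈ Icc 1 T, Measurable[ℱ t] (X t))
    (hint : ∀ t ∈ Icc 1 T, Integrable (fun ω => Real.exp (-X t ω)) μ)
    (δ : ℝ) (hδ : δ ∈ Set.Ioo (0 : ℝ) 1) :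
    ENNReal.ofReal (1 - δ) ≤
      μ {ω | ∀ t ∈ Icc 1 T,
        -∑ s ∈ Icc 1 t, X s ω ≤
          (∑ s ∈ Icc 1 t,
            Real.log ((μ[fun ω' => Real.exp (-X s ω') | ℱ (s - 1)]) ω))
          + Real.log (1 / δ)} := by
  obtain ⟨hδ0, -⟩ := hδ
  have hmeas_le (t : ℕ) (ht : t ≤ T) : ∀ s ∈ Icc 1 t, Measurable[ℱ s] (X s) :=
    fun s hs => hmeas s (Icc_subset_Icc_right ht hs)
  have hville := ville_ineq μ ℱ (expSupermartingale μ ℱ X) T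
    (fun t ht => measurable_expSupermartingale (hmeas_le t ht))
    (fun t ht s hs => setLIntegral_expSupermartingale_succ_le (hmeas_le t ht.le)
      ((hmeas _ (mem_Icc.2 ⟨by omega, ht⟩)).mono (ℱ.le _) le_rfl)
      (hint _ (mem_Icc.2 ⟨by omega, ht⟩)) hs) (ENNReal.ofReal (1 / δ))
  have hinv : (ENNReal.ofReal (1 / δ))⁻¹ = ENNReal.ofReal δ := by
    rw [← ENNReal.ofReal_inv_of_pos (by positivity), one_div, inv_inv]
  rw [lintegral_congr fun ω => expSupermartingale_zero μ ℱ X ω, lintegral_one, measure_univ,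
    mul_comm, ← ENNReal.le_inv_iff_mul_le, hinv] at hville
  refine ofReal_one_sub_le_measure μ hδ0.le hville fun ω hω t ht => ?_
  simp only [Set.mem_ofPred_eq, not_exists, not_and, not_le] at hω
  exact neg_sum_le_of_expSupermartingale_lt (hω t (mem_Icc.1 ht).2)
end

section
/- Let (Omega, F, P) be a probability space equipped with a filtration (F_k) for k in {0, 1, ..., K}, let I be a finite nonempty index set, and for each i in I and k in {1, ..., K} let X_{i,k} be a real-valued random variable that is F_k-measurable with exp(-X_{i,k}/2) integrable, and let h_{i,k} be an F_{k-1}-measurable random variable taking values in [0,1] such that E[ exp(-X_{i,k}/2) | F_{k-1} ] <= 1 - h_{i,k} almost surely. Then for any delta in (0,1), with probability at least 1 - delta the following holds simultaneously for all i in I and all k in {1, ..., K}: - sum_{s=1}^k X_{i,s} <= - 2 * sum_{s=1}^k h_{i,s} + 2 * log(|I| / delta). -/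
open MeasureTheory Finset

/-!
For each `i`, the process `M n = exp (∑ s ∈ Icc 1 n, (g i s - X i s / 2))` is a nonnegative
supermartingale with `M 0 = 1`: given `ℱ (k - 1)`, its new factor has conditional mean at most
`exp (g i k) * (1 - g i k) ≤ exp (g i k) * exp (-g i k) = 1`. Ville's inequality bounds the
probability that `M` ever reaches `|I| / δ` by `δ / |I|`, a union bound over `I` gives total
failure probability at most `δ`, and off the failure event taking logarithms in `M k < |I| / δ`
is the claimed bound.
-/

namespace MeasureTheory

variable {Ω : Type*} {m m0 : MeasurableSpace Ω} {μ : Measure Ω} {ℱ : Filtration ℕ m0}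

theorem integrable_exp_mul {g u : Ω → ℝ} {c : ℝ} (hg : AEStronglyMeasurable g μ)
    (hgc : ∀ ω, g ω ≤ c) (hu : Integrable u μ) :
    Integrable (fun ω => Real.exp (g ω) * u ω) μ :=
  hu.bdd_mul (Real.continuous_exp.comp_aestronglyMeasurable hg)
    (.of_forall fun ω => by
      rw [Real.norm_of_nonneg (Real.exp_pos _).le]; exact Real.exp_le_exp.mpr (hgc ω))

theorem condExp_exp_mul_le_one {g u : Ω → ℝ} {c : ℝ} (hm : m ≤ m0)
    (hg : StronglyMeasurable[m] g) (hgc : ∀ ω, g ω ≤ c) (hu : Integrable u μ)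
    (hcond : μ[u|m] ≤ᵐ[μ] 1 - g) :
    μ[fun ω => Real.exp (g ω) * u ω|m] ≤ᵐ[μ] 1 := by
  have hexp : StronglyMeasurable[m] fun ω => Real.exp (g ω) :=
    Real.continuous_exp.comp_stronglyMeasurable hg
  filter_upwards [condExp_mul_of_stronglyMeasurable_left hexp
    (integrable_exp_mul (hg.mono hm).aestronglyMeasurable hgc hu) hu, hcond] with ω hpull hle
  calc μ[fun ω => Real.exp (g ω) * u ω|m] ω = Real.exp (g ω) * μ[u|m] ω := hpull
    _ ≤ Real.exp (g ω) * (1 - g ω) := by gcongr; exact hle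
    _ ≤ Real.exp (g ω) * Real.exp (-g ω) := by gcongr; linarith [Real.add_one_le_exp (-g ω)]
    _ = 1 := by rw [← Real.exp_add, add_neg_cancel, Real.exp_zero]

theorem integral_mul_le_integral_of_condExp_le_one [IsFiniteMeasure μ] {h u : Ω → ℝ} {C : ℝ}
    (hm : m ≤ m0) (hh : StronglyMeasurable[m] h) (hh0 : 0 ≤ h) (hhC : ∀ ω, h ω ≤ C)
    (hu : Integrable u μ) (hcond : μ[u|m] ≤ᵐ[μ] 1) :
    ∫ ω, h ω * u ω ∂μ ≤ ∫ ω, h ω ∂μ := by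
  have hh_bdd : ∀ᵐ ω ∂μ, ‖h ω‖ ≤ C :=
    .of_forall fun ω => by rw [Real.norm_of_nonneg (hh0 ω)]; exact hhC ω
  have hh_aesm : AEStronglyMeasurable h μ := (hh.mono hm).aestronglyMeasurable
  calc ∫ ω, h ω * u ω ∂μ = ∫ ω, (μ[h * u|m]) ω ∂μ := (integral_condExp hm).symm
    _ = ∫ ω, h ω * (μ[u|m]) ω ∂μ :=
      integral_congr_ae
        (condExp_mul_of_stronglyMeasurable_left hh (hu.bdd_mul hh_aesm hh_bdd) hu)
    _ ≤ ∫ ω, h ω ∂μ := by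
      refine integral_mono_ae (integrable_condExp.bdd_mul hh_aesm hh_bdd)
        (.of_bound hh_aesm C hh_bdd) ?_
      filter_upwards [hcond] with ω hω using mul_le_of_le_one_right (hh0 ω) hω

/-- Needed before the `m`-measurable factor `h` can be pulled out of `μ[h * u|m]`; proved by
truncating `h` and monotone convergence. -/
theorem integrable_mul_of_condExp_le_one [IsFiniteMeasure μ] {h u : Ω → ℝ} (hm : m ≤ m0)
    (hh : StronglyMeasurable[m] h) (hh0 : 0 ≤ h) (hh_int : Integrable h μ)
    (hu0 : 0 ≤ u) (hu : Integrable u μ) (hcond : μ[u|m] ≤ᵐ[μ] 1) :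
    Integrable (h * u) μ := by
  let hn : ℕ → Ω → ℝ := fun n ω => min (h ω) n
  have hn_meas (n : ℕ) : StronglyMeasurable[m] (hn n) :=
    (hh.measurable.min measurable_const).stronglyMeasurable
  have hn0 (n : ℕ) : 0 ≤ hn n := fun ω => le_min (hh0 ω) n.cast_nonneg
  have hn_int (n : ℕ) : Integrable (fun ω => hn n ω * u ω) μ :=
    hu.bdd_mul ((hn_meas n).mono hm).aestronglyMeasurable
      (.of_forall fun ω => by rw [Real.norm_of_nonneg (hn0 n ω)]; exact min_le_right _ _)
  have hsup (ω : Ω) : ⨆ n, ENNReal.ofReal (hn n ω * u ω) = ENNReal.ofReal (h ω * u ω) := by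
    refine le_antisymm (iSup_le fun n => ?_) (le_iSup_of_le ⌈h ω⌉₊ ?_)
    · exact ENNReal.ofReal_le_ofReal (mul_le_mul_of_nonneg_right (min_le_left _ _) (hu0 ω))
    · rw [show hn ⌈h ω⌉₊ ω = h ω from min_eq_left (Nat.le_ceil _)]
  refine ⟨(hh.mono hm).aestronglyMeasurable.mul hu.1, ?_⟩
  rw [hasFiniteIntegral_iff_ofReal (f := h * u) (.of_forall fun ω => mul_nonneg (hh0 ω) (hu0 ω))]
  calc ∫⁻ ω, ENNReal.ofReal ((h * u) ω) ∂μ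
      = ⨆ n, ∫⁻ ω, ENNReal.ofReal (hn n ω * u ω) ∂μ := by
        simp_rw [Pi.mul_apply, ← hsup]
        refine lintegral_iSup' (fun n => (hn_int n).1.aemeasurable.ennreal_ofReal)
          (.of_forall fun ω a b hab => ENNReal.ofReal_le_ofReal ?_)
        exact mul_le_mul_of_nonneg_right (min_le_min le_rfl (Nat.cast_le.mpr hab)) (hu0 ω)
    _ ≤ ENNReal.ofReal (∫ ω, h ω ∂μ) := iSup_le fun n => by
        rw [← ofReal_integral_eq_lintegral_ofReal (hn_int n)
          (.of_forall fun ω => mul_nonneg (hn0 n ω) (hu0 ω))]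
        refine ENNReal.ofReal_le_ofReal ?_
        calc ∫ ω, hn n ω * u ω ∂μ ≤ ∫ ω, hn n ω ∂μ :=
              integral_mul_le_integral_of_condExp_le_one hm (hn_meas n) (hn0 n)
                (fun ω => min_le_right _ _) hu hcond
          _ ≤ ∫ ω, h ω ∂μ :=
              integral_mono (hh_int.mono' ((hn_meas n).mono hm).aestronglyMeasurable
                (.of_forall fun ω => by
                  rw [Real.norm_of_nonneg (hn0 n ω)]; exact min_le_left _ _))
                hh_int fun ω => min_le_left _ _
    _ < ⊤ := ENNReal.ofReal_lt_top

theorem supermartingale_prod_range [IsFiniteMeasure μ] {D : ℕ → Ω → ℝ}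
    (hD_meas : ∀ k, StronglyMeasurable[ℱ (k + 1)] (D k)) (hD0 : ∀ k, 0 ≤ D k)
    (hD_int : ∀ k, Integrable (D k) μ) (hD_cond : ∀ k, μ[D k|ℱ k] ≤ᵐ[μ] 1) :
    Supermartingale (fun n ω => ∏ k ∈ range n, D k ω) ℱ μ := by
  set M : ℕ → Ω → ℝ := fun n ω => ∏ k ∈ range n, D k ω
  have hM_succ (n : ℕ) : M (n + 1) = M n * D n := funext fun ω => prod_range_succ _ _
  have hM0 (n : ℕ) : 0 ≤ M n := fun ω => prod_nonneg fun k _ => hD0 k ω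
  have hM_adapted : StronglyAdapted ℱ M := fun n =>
    Finset.stronglyMeasurable_fun_prod _ fun k hk =>
      (hD_meas k).mono (ℱ.mono (Nat.succ_le_of_lt (mem_range.mp hk)))
  have hM_int (n : ℕ) : Integrable (M n) μ := by
    induction n with
    | zero => simp [M]
    | succ n ih =>
      rw [hM_succ]
      exact integrable_mul_of_condExp_le_one (ℱ.le n) (hM_adapted n) (hM0 n) ih (hD0 n)
        (hD_int n) (hD_cond n)
  refine supermartingale_nat hM_adapted hM_int fun n => ?_
  rw [hM_succ]
  filter_upwards [condExp_mul_of_stronglyMeasurable_left (hM_adapted n)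
    (hM_succ n ▸ hM_int (n + 1)) (hD_int n), hD_cond n] with ω hpull hle
  rw [hpull]
  exact mul_le_of_le_one_right (hM0 n ω) hle

/-- Ville's inequality, by optional stopping at the first time `f` reaches `ε`. -/
theorem Supermartingale.mul_measureReal_exists_le_le [IsFiniteMeasure μ] {f : ℕ → Ω → ℝ}
    (hf : Supermartingale f ℱ μ) (hf0 : 0 ≤ f) (ε : ℝ) (n : ℕ) :
    ε * μ.real {ω | ∃ k ≤ n, ε ≤ f k ω} ≤ ∫ ω, f 0 ω ∂μ := by
  let τ : Ω → WithTop ℕ := fun ω => (hittingBtwn f (Set.Ici ε) 0 n ω : ℕ)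
  have hτ : IsStoppingTime ℱ τ :=
    Adapted.isStoppingTime_hittingBtwn (fun k => (hf.stronglyAdapted k).measurable)
      measurableSet_Ici
  have hτn (ω : Ω) : τ ω ≤ n := WithTop.coe_le_coe.mpr (hittingBtwn_le ω)
  have hset : {ω | ∃ k ≤ n, ε ≤ f k ω} = {ω | ε ≤ stoppedValue f τ ω} := by
    ext ω
    refine ⟨fun ⟨k, hkn, hk⟩ => stoppedValue_hittingBtwn_mem ⟨k, ⟨k.zero_le, hkn⟩, hk⟩,
      fun h => ⟨_, hittingBtwn_le ω, h⟩⟩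
  have hstopped : ∫ ω, stoppedValue f τ ω ∂μ ≤ ∫ ω, f 0 ω ∂μ := by
    have := hf.neg.expected_stoppedValue_mono (isStoppingTime_const ℱ 0) hτ
      (fun ω => zero_le) hτn
    simpa [stoppedValue, integral_neg] using this
  rw [hset]
  exact (mul_meas_ge_le_integral_of_nonneg (.of_forall fun ω => hf0 _ ω)
    (integrable_stoppedValue ℕ hτ hf.integrable hτn) ε).trans hstopped

/-- The factors of the exponential process `exp (∑ s ∈ Icc 1 n, (g s - X s / 2))`, set to `1`
after time `K` so that the process is defined at all times. -/
noncomputable def expIncrement (K : ℕ) (X g : ℕ → Ω → ℝ) (k : ℕ) : Ω → ℝ :=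
  if k < K then fun ω => Real.exp (g (k + 1) ω - X (k + 1) ω / 2) else 1

theorem expIncrement_nonneg (K : ℕ) (X g : ℕ → Ω → ℝ) (k : ℕ) : 0 ≤ expIncrement K X g k := by
  unfold expIncrement
  split_ifs
  exacts [fun ω => (Real.exp_pos _).le, zero_le_one]

theorem prod_range_expIncrement {K n : ℕ} (hn : n ≤ K) (X g : ℕ → Ω → ℝ) (ω : Ω) :
    ∏ k ∈ range n, expIncrement K X g k ω = Real.exp (∑ s ∈ Icc 1 n, (g s ω - X s ω / 2)) := by
  induction n with
  | zero => simp
  | succ n ih =>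
    rw [prod_range_succ, ih (by omega), sum_Icc_succ_top (by omega), Real.exp_add,
      expIncrement, if_pos (by omega)]

theorem supermartingale_prod_range_expIncrement [IsFiniteMeasure μ] {K : ℕ} {X g : ℕ → Ω → ℝ}
    (hXmeas : ∀ k ∈ Icc 1 K, Measurable[ℱ k] (X k))
    (hXint : ∀ k ∈ Icc 1 K, Integrable (fun ω => Real.exp (-X k ω / 2)) μ)
    (hgmeas : ∀ k ∈ Icc 1 K, Measurable[ℱ (k - 1)] (g k))
    (hg_le : ∀ k ∈ Icc 1 K, ∀ ω, g k ω ≤ 1)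
    (hcond : ∀ k ∈ Icc 1 K, μ[fun ω => Real.exp (-X k ω / 2)|ℱ (k - 1)] ≤ᵐ[μ] 1 - g k) :
    Supermartingale (fun n ω => ∏ k ∈ range n, expIncrement K X g k ω) ℱ μ := by
  have hmem {k : ℕ} (hk : k < K) : k + 1 ∈ Icc 1 K := mem_Icc.mpr ⟨by omega, hk⟩
  have hsplit (k : ℕ) : (fun ω => Real.exp (g (k + 1) ω - X (k + 1) ω / 2)) =
      fun ω => Real.exp (g (k + 1) ω) * Real.exp (-X (k + 1) ω / 2) :=
    funext fun ω => by rw [← Real.exp_add]; ring_nf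
  refine supermartingale_prod_range (fun k => ?_) (expIncrement_nonneg K X g) (fun k => ?_)
    (fun k => ?_) <;>
    rcases lt_or_ge k K with hk | hk <;>
    simp only [expIncrement, hk, if_pos, if_false, not_lt.mpr]
  · exact (((hgmeas _ (hmem hk)).mono (ℱ.mono k.le_succ) le_rfl).sub
      ((hXmeas _ (hmem hk)).div_const 2)).exp.stronglyMeasurable
  · exact stronglyMeasurable_const
  · rw [hsplit]
    exact integrable_exp_mul ((hgmeas _ (hmem hk)).mono (ℱ.le k) le_rfl).aestronglyMeasurable
      (hg_le _ (hmem hk)) (hXint _ (hmem hk))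
  · exact integrable_const 1
  · rw [hsplit]
    exact condExp_exp_mul_le_one (ℱ.le k) (hgmeas _ (hmem hk)).stronglyMeasurable
      (hg_le _ (hmem hk)) (hXint _ (hmem hk)) (hcond _ (hmem hk))
  · rw [Pi.one_def, condExp_const (ℱ.le k)]

theorem ofReal_one_sub_le_measure_compl_iUnion [IsProbabilityMeasure μ] {ι : Type*} [Fintype ι]
    {s : ι → Set Ω} {δ : ℝ} (hδ : 0 ≤ δ)
    (hs : ∀ i, μ (s i) ≤ ENNReal.ofReal (δ / Fintype.card ι)) :
    ENNReal.ofReal (1 - δ) ≤ μ (⋃ i, s i)ᶜ := by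
  have hunion : μ (⋃ i, s i) ≤ ENNReal.ofReal δ := calc
    μ (⋃ i, s i) ≤ ∑ i, μ (s i) := measure_iUnion_fintype_le μ s
    _ ≤ ∑ _i : ι, ENNReal.ofReal (δ / Fintype.card ι) := sum_le_sum fun i _ => hs i
    _ ≤ ENNReal.ofReal δ := by
      rw [sum_const, card_univ, nsmul_eq_mul, ← ENNReal.ofReal_natCast,
        ← ENNReal.ofReal_mul (by positivity)]
      refine ENNReal.ofReal_le_ofReal ?_
      rcases eq_or_ne (Fintype.card ι) 0 with h | h
      · simp [h, hδ]
      · rw [mul_div_cancel₀ _ (by exact_mod_cast h)]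
  calc ENNReal.ofReal (1 - δ) = 1 - ENNReal.ofReal δ := by
        rw [ENNReal.ofReal_sub _ hδ, ENNReal.ofReal_one]
    _ ≤ 1 - μ (⋃ i, s i) := tsub_le_tsub_left hunion 1
    _ ≤ μ (⋃ i, s i)ᶜ :=
      tsub_le_iff_left.mpr (by simpa only [measure_univ] using measure_univ_le_add_compl (μ := μ) _)

end MeasureTheory

theorem stmt12_general {Ω : Type*} {m0 : MeasurableSpace Ω} (μ : Measure Ω)
    [IsProbabilityMeasure μ]
    (K : ℕ) (ℱ : Filtration ℕ m0)
    {I : Type*} [Fintype I]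
    (X g : I → ℕ → Ω → ℝ)
    (hXmeas : ∀ i, ∀ k ∈ Icc 1 K, Measurable[ℱ k] (X i k))
    (hXint : ∀ i, ∀ k ∈ Icc 1 K,
      Integrable (fun ω => Real.exp (-X i k ω / 2)) μ)
    (hgmeas : ∀ i, ∀ k ∈ Icc 1 K, Measurable[ℱ (k - 1)] (g i k))
    (hg01 : ∀ i, ∀ k ∈ Icc 1 K, ∀ ω, g i k ω ∈ Set.Icc (0 : ℝ) 1)
    (hcond : ∀ i, ∀ k ∈ Icc 1 K,
      ∀ᵐ ω ∂μ,
        (μ[fun ω' => Real.exp (-X i k ω' / 2) | ℱ (k - 1)]) ω ≤ 1 - g i k ω)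
    (δ : ℝ) (hδ : δ ∈ Set.Ioo (0 : ℝ) 1) :
    ENNReal.ofReal (1 - δ) ≤
      μ {ω | ∀ i, ∀ k ∈ Icc 1 K,
        -∑ s ∈ Icc 1 k, X i s ω ≤
          -2 * ∑ s ∈ Icc 1 k, g i s ω
          + 2 * Real.log ((Fintype.card I : ℝ) / δ)} := by
  set ε : ℝ := (Fintype.card I : ℝ) / δ
  have hε (i : I) : 0 < ε := div_pos (by exact_mod_cast Fintype.card_pos_iff.mpr ⟨i⟩) hδ.1
  let M : I → ℕ → Ω → ℝ := fun i n ω => ∏ k ∈ range n, expIncrement K (X i) (g i) k ω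
  have hgood : (⋃ i, {ω | ∃ k ≤ K, ε ≤ M i k ω})ᶜ ⊆ {ω | ∀ i, ∀ k ∈ Icc 1 K,
      -∑ s ∈ Icc 1 k, X i s ω ≤ -2 * ∑ s ∈ Icc 1 k, g i s ω + 2 * Real.log ε} := by
    intro ω hω i k hk
    have hlt : M i k ω < ε :=
      not_le.mp fun h => hω (Set.mem_iUnion.mpr ⟨i, k, (mem_Icc.mp hk).2, h⟩)
    rw [show M i k ω = _ from prod_range_expIncrement (mem_Icc.mp hk).2 (X i) (g i) ω,
      ← Real.lt_log_iff_exp_lt (hε i), sum_sub_distrib, ← sum_div] at hlt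
    linarith
  refine (ofReal_one_sub_le_measure_compl_iUnion hδ.1.le fun i => ?_).trans (measure_mono hgood)
  have hville := (supermartingale_prod_range_expIncrement (hXmeas i) (hXint i) (hgmeas i)
    (fun k hk ω => (hg01 i k hk ω).2) (hcond i)).mul_measureReal_exists_le_le
    (fun n ω => prod_nonneg fun k _ => expIncrement_nonneg K (X i) (g i) k ω) ε K
  simp only [range_zero, prod_empty, integral_const, probReal_univ, smul_eq_mul, mul_one] at hville
  rw [← ofReal_measureReal, ← one_div_div]
  exact ENNReal.ofReal_le_ofReal ((le_div_iff₀' (hε i)).mpr hville)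

/-- Abstract form of the model-based generalization bound (Proposition 5.2). -/
theorem stmt12 {Ω : Type*} {m0 : MeasurableSpace Ω} (μ : Measure Ω)
    [IsProbabilityMeasure μ]
    (K : ℕ) (ℱ : Filtration ℕ m0)
    {I : Type*} [Fintype I] [Nonempty I]
    (X g : I → ℕ → Ω → ℝ)
    (hXmeas : ∀ i, ∀ k ∈ Icc 1 K, Measurable[ℱ k] (X i k))
    (hXint : ∀ i, ∀ k ∈ Icc 1 K,
      Integrable (fun ω => Real.exp (-X i k ω / 2)) μ)
    (hgmeas : ∀ i, ∀ k ∈ Icc 1 K, Measurable[ℱ (k - 1)] (g i k))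
    (hg01 : ∀ i, ∀ k ∈ Icc 1 K, ∀ ω, g i k ω ∈ Set.Icc (0 : ℝ) 1)
    (hcond : ∀ i, ∀ k ∈ Icc 1 K,
      ∀ᵐ ω ∂μ,
        (μ[fun ω' => Real.exp (-X i k ω' / 2) | ℱ (k - 1)]) ω ≤ 1 - g i k ω)
    (δ : ℝ) (hδ : δ ∈ Set.Ioo (0 : ℝ) 1) :
    ENNReal.ofReal (1 - δ) ≤
      μ {ω | ∀ i, ∀ k ∈ Icc 1 K,
        -∑ s ∈ Icc 1 k, X i s ω ≤
          -2 * ∑ s ∈ Icc 1 k, g i s ω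
          + 2 * Real.log ((Fintype.card I : ℝ) / δ)} :=
  stmt12_general μ K ℱ X g hXmeas hXint hgmeas hg01 hcond δ hδ
end

section
/- There exists an absolute constant C > 0 such that the following holds. Let (Omega, F, P) be a probability space equipped with a filtration (F_k) for k in {0, 1, ..., K}, let I be a finite nonempty index set, let R > 0, and for each i in I and k in {1, ..., K} let W_{i,k} be a real-valued random variable that is F_k-measurable with |W_{i,k}| <= R almost surely, such that m_{i,k} := E[ W_{i,k} | F_{k-1} ] >= 0 almost surely and E[ W_{i,k}^2 | F_{k-1} ] <= 4 * R * m_{i,k} almost surely. Then for any delta in (0,1), with probability at least 1 - delta the following holds simultaneously for all i in I and all k in {1, ..., K}: - sum_{s=1}^k W_{i,s} <= C * R * log( K * |I| / delta ). -/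
/-!
Put `λ = 1/(4R)`. Since `|λ W| ≤ 1/4`, the bound `exp x ≤ 1 + x + x²` for `|x| ≤ 1` and the
variance condition give `E[exp(-λ W_{i,k}) | F_{k-1}] ≤ 1 - λ m_{i,k} + λ² · 4R m_{i,k} = 1`,
so `exp(-λ ∑_{s ≤ k} W_{i,s})` has expectation at most `1`. Chernoff's bound then gives
`P(-∑_{s ≤ k} W_{i,s} ≥ 4R log(K|I|/δ)) ≤ δ/(K|I|)`, and a union bound over the `K|I|` pairs
`(i, k)` finishes the proof with `C = 4`.
-/

open MeasureTheory Finset Real ProbabilityTheory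

lemma Real.exp_le_one_add_add_sq {x : ℝ} (hx : |x| ≤ 1) : exp x ≤ 1 + x + x ^ 2 := by
  linarith [(abs_le.mp (abs_exp_sub_one_sub_id_le hx)).2]

section Integrability

variable {Ω : Type*} {m0 : MeasurableSpace Ω} {μ : Measure Ω}

lemma integrable_exp_neg_mul [IsFiniteMeasure μ] {X : Ω → ℝ} {C : ℝ}
    (hX : AEStronglyMeasurable X μ) (hbdd : ∀ᵐ ω ∂μ, |X ω| ≤ C) (c : ℝ) :
    Integrable (fun ω => exp (-(c * X ω))) μ := by
  refine .of_bound (continuous_exp.comp_aestronglyMeasurable (hX.const_mul c).neg)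
    (exp (|c| * C)) ?_
  filter_upwards [hbdd] with ω hω
  rw [norm_of_nonneg (exp_pos _).le, exp_le_exp]
  calc -(c * X ω) ≤ |c * X ω| := neg_le_abs _
    _ = |c| * |X ω| := abs_mul _ _
    _ ≤ |c| * C := mul_le_mul_of_nonneg_left hω (abs_nonneg c)

lemma ae_abs_sum_le {ι : Type*} {t : Finset ι} {W : ι → Ω → ℝ} {R : ℝ}
    (hbdd : ∀ s ∈ t, ∀ᵐ ω ∂μ, |W s ω| ≤ R) :
    ∀ᵐ ω ∂μ, |∑ s ∈ t, W s ω| ≤ #t * R := by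
  filter_upwards [(Filter.eventually_all_finset t).2 hbdd] with ω hω
  calc |∑ s ∈ t, W s ω| ≤ ∑ s ∈ t, |W s ω| := abs_sum_le_sum_abs _ _
    _ ≤ #t • R := sum_le_card_nsmul t _ R hω
    _ = #t * R := nsmul_eq_mul _ _

end Integrability

section ConditionalExpectation

variable {Ω : Type*} {m m0 : MeasurableSpace Ω} {μ : Measure Ω}

lemma condExp_exp_neg_mul_le [IsFiniteMeasure μ] (hm : m ≤ m0) {W : Ω → ℝ} {R c : ℝ}
    (hW : AEStronglyMeasurable W μ) (hbdd : ∀ᵐ ω ∂μ, |W ω| ≤ R) (hc : 0 ≤ c)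
    (hcR : c * R ≤ 1) :
    μ[fun ω => exp (-(c * W ω)) | m] ≤ᵐ[μ]
      fun ω => 1 - c * μ[W | m] ω + c ^ 2 * μ[fun ω => W ω ^ 2 | m] ω := by
  have hW_int : Integrable W μ := .of_bound hW R (by simpa only [norm_eq_abs] using hbdd)
  have hW2_int : Integrable (fun ω => W ω ^ 2) μ := by
    refine .of_bound (hW.pow 2) (R ^ 2) ?_
    filter_upwards [hbdd] with ω hω
    rw [norm_pow, norm_eq_abs]
    exact pow_le_pow_left₀ (abs_nonneg _) hω 2
  set q : Ω → ℝ := (fun _ => 1) - c • W + c ^ 2 • fun ω => W ω ^ 2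
  have hq_int : Integrable q μ :=
    ((integrable_const 1).sub (hW_int.smul c)).add (hW2_int.smul (c ^ 2))
  have hexp_le_q : (fun ω => exp (-(c * W ω))) ≤ᵐ[μ] q := by
    filter_upwards [hbdd] with ω hω
    have hx : |-(c * W ω)| ≤ 1 := by
      rw [abs_neg, abs_mul, abs_of_nonneg hc]
      nlinarith [abs_nonneg (W ω)]
    have := exp_le_one_add_add_sq hx
    simp only [q, Pi.add_apply, Pi.sub_apply, Pi.smul_apply, smul_eq_mul]
    linarith
  have hq_cond : μ[q | m] =ᵐ[μ]
      fun ω => 1 - c * μ[W | m] ω + c ^ 2 * μ[fun ω => W ω ^ 2 | m] ω := by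
    filter_upwards [condExp_add ((integrable_const 1).sub (hW_int.smul c))
        (hW2_int.smul (c ^ 2)) m, condExp_sub (integrable_const 1) (hW_int.smul c) m,
      condExp_smul c W m, condExp_smul (c ^ 2) (fun ω => W ω ^ 2) m] with ω h1 h2 h3 h4
    rw [h1, Pi.add_apply, h2, Pi.sub_apply, h3, h4, condExp_const hm]
    rfl
  filter_upwards [condExp_mono (integrable_exp_neg_mul hW hbdd c) hq_int hexp_le_q, hq_cond]
    with ω h1 h2
  exact h1.trans h2.le

lemma condExp_exp_neg_mul_le_one [IsFiniteMeasure μ] (hm : m ≤ m0) {W : Ω → ℝ} {R : ℝ}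
    (hR : 0 < R) (hW : AEStronglyMeasurable W μ) (hbdd : ∀ᵐ ω ∂μ, |W ω| ≤ R)
    (hvar : ∀ᵐ ω ∂μ, μ[fun ω => W ω ^ 2 | m] ω ≤ 4 * R * μ[W | m] ω) :
    μ[fun ω => exp (-((4 * R)⁻¹ * W ω)) | m] ≤ᵐ[μ] 1 := by
  have hcR : (4 * R)⁻¹ * R ≤ 1 := by
    rw [inv_mul_le_iff₀ (by positivity)]
    linarith
  filter_upwards [condExp_exp_neg_mul_le hm hW hbdd (by positivity) hcR, hvar] with ω h1 h2
  have hc : (4 * R)⁻¹ ^ 2 * (4 * R) = (4 * R)⁻¹ := by field_simp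
  calc _ ≤ 1 - (4 * R)⁻¹ * μ[W | m] ω + (4 * R)⁻¹ ^ 2 * μ[fun ω => W ω ^ 2 | m] ω := h1
    _ ≤ 1 - (4 * R)⁻¹ * μ[W | m] ω + (4 * R)⁻¹ ^ 2 * (4 * R * μ[W | m] ω) := by gcongr
    _ = 1 := by rw [← mul_assoc, hc]; ring

lemma integral_mul_le_integral_of_condExp_le_one (hm : m ≤ m0) [SigmaFinite (μ.trim hm)]
    {f g : Ω → ℝ} (hf : StronglyMeasurable[m] f) (hf_nonneg : ∀ ω, 0 ≤ f ω)
    (hf_int : Integrable f μ) (hg_int : Integrable g μ) (hfg_int : Integrable (f * g) μ)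
    (hg : μ[g | m] ≤ᵐ[μ] 1) :
    ∫ ω, (f * g) ω ∂μ ≤ ∫ ω, f ω ∂μ := by
  rw [← integral_condExp hm]
  refine integral_mono_ae integrable_condExp hf_int ?_
  filter_upwards [condExp_mul_of_stronglyMeasurable_left hf hfg_int hg_int, hg] with ω h1 h2
  rw [h1, Pi.mul_apply]
  exact mul_le_of_le_one_right (hf_nonneg ω) h2

end ConditionalExpectation

section Martingale

variable {Ω : Type*} {m0 : MeasurableSpace Ω} {μ : Measure Ω} {ℱ : Filtration ℕ m0}
  {W : ℕ → Ω → ℝ} {n : ℕ} {R : ℝ}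

lemma stronglyMeasurable_sum_Icc (hmeas : ∀ s ∈ Icc 1 n, Measurable[ℱ s] (W s)) :
    StronglyMeasurable[ℱ n] fun ω => ∑ s ∈ Icc 1 n, W s ω := by
  refine Measurable.stronglyMeasurable (Finset.measurable_sum _ fun s hs => ?_)
  exact (hmeas s hs).mono (ℱ.mono (mem_Icc.mp hs).2) le_rfl

variable [IsProbabilityMeasure μ]

lemma integral_exp_neg_mul_sum_le_one (hR : 0 < R)
    (hmeas : ∀ s ∈ Icc 1 n, Measurable[ℱ s] (W s))
    (hbdd : ∀ s ∈ Icc 1 n, ∀ᵐ ω ∂μ, |W s ω| ≤ R)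
    (hvar : ∀ s ∈ Icc 1 n, ∀ᵐ ω ∂μ,
      μ[fun ω => W s ω ^ 2 | ℱ (s - 1)] ω ≤ 4 * R * μ[W s | ℱ (s - 1)] ω) :
    ∫ ω, exp (-((4 * R)⁻¹ * ∑ s ∈ Icc 1 n, W s ω)) ∂μ ≤ 1 := by
  induction n with
  | zero => simp
  | succ n ih =>
    have hsub : Icc 1 n ⊆ Icc 1 (n + 1) := Icc_subset_Icc_right n.le_succ
    have hlast : n + 1 ∈ Icc 1 (n + 1) := by simp
    set c := (4 * R)⁻¹
    set f : Ω → ℝ := fun ω => exp (-(c * ∑ s ∈ Icc 1 n, W s ω))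
    set g : Ω → ℝ := fun ω => exp (-(c * W (n + 1) ω))
    have hsplit : (fun ω => exp (-(c * ∑ s ∈ Icc 1 (n + 1), W s ω))) = f * g := by
      ext ω
      rw [sum_Icc_succ_top (by omega), mul_add, neg_add, exp_add, Pi.mul_apply]
    have hS := stronglyMeasurable_sum_Icc hmeas
    have hS_n := stronglyMeasurable_sum_Icc (fun s hs => hmeas s (hsub hs))
    have hW_last : AEStronglyMeasurable (W (n + 1)) μ :=
      ((hmeas _ hlast).mono (ℱ.le _) le_rfl).aestronglyMeasurable
    have hf_int : Integrable f μ := integrable_exp_neg_mul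
      (hS_n.mono (ℱ.le n)).aestronglyMeasurable (ae_abs_sum_le fun s hs => hbdd s (hsub hs)) c
    have hfg_int : Integrable (f * g) μ := hsplit ▸ integrable_exp_neg_mul
      (hS.mono (ℱ.le _)).aestronglyMeasurable (ae_abs_sum_le hbdd) c
    have hg : μ[g | ℱ n] ≤ᵐ[μ] 1 :=
      condExp_exp_neg_mul_le_one (ℱ.le n) hR hW_last (hbdd _ hlast) (hvar _ hlast)
    rw [hsplit]
    calc ∫ ω, (f * g) ω ∂μ ≤ ∫ ω, f ω ∂μ :=
          integral_mul_le_integral_of_condExp_le_one (ℱ.le n)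
            (continuous_exp.comp_stronglyMeasurable (hS_n.const_mul c).neg)
            (fun _ => (exp_pos _).le) hf_int
            (integrable_exp_neg_mul hW_last (hbdd _ hlast) c) hfg_int hg
      _ ≤ 1 := ih (fun s hs => hmeas s (hsub hs)) (fun s hs => hbdd s (hsub hs))
          (fun s hs => hvar s (hsub hs))

lemma measure_le_neg_sum_Icc_le (hR : 0 < R)
    (hmeas : ∀ s ∈ Icc 1 n, Measurable[ℱ s] (W s))
    (hbdd : ∀ s ∈ Icc 1 n, ∀ᵐ ω ∂μ, |W s ω| ≤ R)
    (hvar : ∀ s ∈ Icc 1 n, ∀ᵐ ω ∂μ,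
      μ[fun ω => W s ω ^ 2 | ℱ (s - 1)] ω ≤ 4 * R * μ[W s | ℱ (s - 1)] ω) (t : ℝ) :
    μ {ω | t ≤ -∑ s ∈ Icc 1 n, W s ω} ≤ ENNReal.ofReal (exp (-((4 * R)⁻¹ * t))) := by
  have h_int : Integrable (fun ω => exp ((4 * R)⁻¹ * -∑ s ∈ Icc 1 n, W s ω)) μ := by
    simpa only [mul_neg] using integrable_exp_neg_mul
      ((stronglyMeasurable_sum_Icc hmeas).mono (ℱ.le n)).aestronglyMeasurable
      (ae_abs_sum_le hbdd) (4 * R)⁻¹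
  have h_mgf : mgf (fun ω => -∑ s ∈ Icc 1 n, W s ω) μ (4 * R)⁻¹ ≤ 1 := by
    simpa only [mgf, mul_neg] using integral_exp_neg_mul_sum_le_one hR hmeas hbdd hvar
  rw [← ofReal_measureReal]
  refine ENNReal.ofReal_le_ofReal ?_
  calc μ.real {ω | t ≤ -∑ s ∈ Icc 1 n, W s ω}
      ≤ exp (-(4 * R)⁻¹ * t) * mgf (fun ω => -∑ s ∈ Icc 1 n, W s ω) μ (4 * R)⁻¹ :=
        measure_ge_le_exp_mul_mgf t (by positivity) h_int
    _ ≤ exp (-((4 * R)⁻¹ * t)) := by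
      rw [neg_mul]
      exact mul_le_of_le_one_right (exp_pos _).le h_mgf

end Martingale

lemma ofReal_one_sub_le_measure_forall_mem {Ω ι : Type*} {m0 : MeasurableSpace Ω}
    {μ : Measure Ω} [IsProbabilityMeasure μ] (s : Finset ι) (P : ι → Ω → Prop) {δ : ℝ}
    (hδ : 0 ≤ δ) (h : ∀ j ∈ s, μ {ω | ¬ P j ω} ≤ ENNReal.ofReal (δ / #s)) :
    ENNReal.ofReal (1 - δ) ≤ μ {ω | ∀ j ∈ s, P j ω} := by
  set G := {ω | ∀ j ∈ s, P j ω}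
  have hGc : μ Gᶜ ≤ ENNReal.ofReal δ := by
    have hcompl : Gᶜ = ⋃ j ∈ s, {ω | ¬ P j ω} := by ext; simp [G]
    calc μ Gᶜ ≤ ∑ j ∈ s, μ {ω | ¬ P j ω} := hcompl ▸ measure_biUnion_finset_le s _
      _ ≤ ∑ _j ∈ s, ENNReal.ofReal (δ / #s) := sum_le_sum h
      _ = ENNReal.ofReal (#s * (δ / #s)) := by
        rw [sum_const, nsmul_eq_mul, ENNReal.ofReal_mul (by positivity), ENNReal.ofReal_natCast]
      _ ≤ ENNReal.ofReal δ := by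
        gcongr
        rcases (Nat.cast_nonneg #s : (0 : ℝ) ≤ #s).eq_or_lt with hs | hs
        · rw [← hs, zero_mul]; exact hδ
        · rw [mul_div_cancel₀ _ hs.ne']
  rw [ENNReal.ofReal_sub _ hδ, ENNReal.ofReal_one, tsub_le_iff_right]
  calc (1 : ENNReal) = μ (G ∪ Gᶜ) := by rw [Set.union_compl_self, measure_univ]
    _ ≤ μ G + μ Gᶜ := measure_union_le _ _
    _ ≤ μ G + ENNReal.ofReal δ := by gcongr

/-- Abstract form of Lemma A.1 of the paper (bound on the loss of the true
hypothesis in the model-free setting). -/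
theorem stmt14 : ∃ C : ℝ, 0 < C ∧
    ∀ (Ω : Type) (m0 : MeasurableSpace Ω) (μ : Measure Ω),
      IsProbabilityMeasure μ →
    ∀ (K : ℕ) (ℱ : Filtration ℕ m0) (I : Type) (_ : Fintype I) (_ : Nonempty I)
      (R : ℝ), 0 < R →
    ∀ W : I → ℕ → Ω → ℝ,
      (∀ i, ∀ k ∈ Icc 1 K, Measurable[ℱ k] (W i k)) →
      (∀ i, ∀ k ∈ Icc 1 K, ∀ᵐ ω ∂μ, |W i k ω| ≤ R) →
      (∀ i, ∀ k ∈ Icc 1 K, ∀ᵐ ω ∂μ, 0 ≤ (μ[W i k | ℱ (k - 1)]) ω) →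
      (∀ i, ∀ k ∈ Icc 1 K, ∀ᵐ ω ∂μ,
        (μ[fun ω' => W i k ω' ^ 2 | ℱ (k - 1)]) ω ≤
          4 * R * (μ[W i k | ℱ (k - 1)]) ω) →
    ∀ δ : ℝ, δ ∈ Set.Ioo (0 : ℝ) 1 →
      ENNReal.ofReal (1 - δ) ≤
        μ {ω | ∀ i, ∀ k ∈ Icc 1 K,
          -∑ s ∈ Icc 1 k, W i s ω ≤
            C * R * Real.log ((K : ℝ) * (Fintype.card I : ℝ) / δ)} := by
  refine ⟨4, by norm_num, ?_⟩
  intro Ω m0 μ _ K ℱ I _ _ R hR W hmeas hbdd _ hvar δ ⟨hδ0, _⟩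
  set pairs : Finset (I × ℕ) := univ ×ˢ Icc 1 K
  have hpairs : (#pairs : ℝ) = K * Fintype.card I := by simp [pairs, mul_comm]
  have htail : ∀ p ∈ pairs, μ {ω | ¬ -∑ s ∈ Icc 1 p.2, W p.1 s ω ≤
      4 * R * log (K * Fintype.card I / δ)} ≤ ENNReal.ofReal (δ / #pairs) := by
    rintro ⟨i, k⟩ hik
    have hk : k ∈ Icc 1 K := (mem_product.mp hik).2
    have hsub : Icc 1 k ⊆ Icc 1 K := Icc_subset_Icc_right (mem_Icc.mp hk).2
    have hpos : 0 < (K : ℝ) * Fintype.card I / δ := by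
      have : 1 ≤ K := (mem_Icc.mp hk).1.trans (mem_Icc.mp hk).2
      have : 0 < Fintype.card I := Fintype.card_pos_iff.mpr ⟨i⟩
      positivity
    calc _ ≤ μ {ω | 4 * R * log (K * Fintype.card I / δ) ≤ -∑ s ∈ Icc 1 k, W i s ω} :=
          measure_mono fun ω hω => (not_le.mp hω).le
      _ ≤ _ := measure_le_neg_sum_Icc_le hR (fun s hs => hmeas i s (hsub hs))
          (fun s hs => hbdd i s (hsub hs)) (fun s hs => hvar i s (hsub hs)) _
      _ = ENNReal.ofReal (δ / #pairs) := by
        rw [← mul_assoc, inv_mul_cancel₀ (by positivity), one_mul, exp_neg, exp_log hpos,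
          inv_div, hpairs]
  calc ENNReal.ofReal (1 - δ) ≤ μ {ω | ∀ p ∈ pairs, -∑ s ∈ Icc 1 p.2, W p.1 s ω ≤
        4 * R * log (K * Fintype.card I / δ)} :=
        ofReal_one_sub_le_measure_forall_mem pairs _ hδ0.le htail
    _ = _ := by simp only [pairs, mem_product, mem_univ, true_and, Prod.forall]
end

section
/- Consider a finite-horizon two-player zero-sum Markov game with finite nonempty state set S, finite nonempty action sets A (max-player) and B (min-player), horizon H, transition kernels P_h : S x A x B -> (S -> R) with P_h(x,a,b,.) nonnegative and summing to 1 over S for each h in {1,...,H}, reward functions r_h : S x A x B -> R, and fixed initial state x_1 in S. For W : S -> R write (P_h W)(x,a,b) = sum_{x'} P_h(x,a,b,x') W(x'). Given a policy pair (mu, nu), where mu_h : S -> (A -> R) and nu_h : S -> (B -> R) assign probability vectors, define the value functions backward by V_{H+1}^{mu,nu} = 0 and V_h^{mu,nu}(x) = sum_{a,b} mu_h(x,a) nu_h(x,b) [ r_h(x,a,b) + (P_h V_{h+1}^{mu,nu})(x,a,b) ]; define the occupancy measures by d_1 = the point mass at x_1 and d_{h+1}(x') = sum_{x,a,b} d_h(x)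 mu_h(x,a) nu_h(x,b) P_h(x,a,b,x'), and for G : S x A x B -> R write E_{(mu,nu)}[G_h] = sum_{x,a,b} d_h(x) mu_h(x,a) nu_h(x,b) G(x,a,b). Let f = (f_1, ..., f_{H+1}) with f_h : S x A x B -> R and f_{H+1} = 0, and define V_{h,f}(x) = sup over probability vectors p on A of min_{b in B} sum_a p(a) f_h(x,a,b). Suppose the max-player policy mu is Nash-greedy with respect to f, i.e., for all h in {1,...,H} and all x in S, min_{b in B} sum_a mu_h(x,a) f_h(x,a,b) = V_{h,f}(x). Then for every min-player policy nu: V_{1,f}(x_1) - V_1^{mu,nu}(x_1) <= sum_{h=1}^H E_{(mu,nu)}[ E_h ], where E_h(x,a,b) = f_h(x,a,b) - r_h(x,a,b) - (P_h V_{h+1,f})(x,a,b). -/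
/-!
Let `G h = ∑ₓ d_h(x) (V_{h,f}(x) - V_h^{μ,ν}(x))`. Because `μ` is Nash-greedy for `f`, the value
`V_{h,f}(x)` is at most the `(μ, ν)`-average of `f_h(x, ·, ·)`, so `G h` is bounded by the expected
Bellman residual at step `h` plus an expected gap at the next state, which the occupancy recursion
turns into `G (h + 1)`. Telescoping from `h = 1`, where `G 1` is the left-hand side, to `h = H + 1`,
where `f` and hence `V_f` vanish, gives the decomposition.
-/

open Finset

theorem Finset.sub_le_sum_Icc_of_le_add {M : Type*} [AddCommGroup M] [PartialOrder M]
    [IsOrderedAddMonoid M] {G E : ℕ → M} {m n : ℕ} (hmn : m ≤ n + 1)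
    (h : ∀ k ∈ Icc m n, G k ≤ E k + G (k + 1)) :
    G m - G (n + 1) ≤ ∑ k ∈ Icc m n, E k := by
  rw [← Ico_add_one_right_eq_Icc] at h ⊢
  rw [← neg_sub, ← sum_Ico_sub G hmn, ← sum_neg_distrib]
  exact sum_le_sum fun k hk => by simpa [sub_le_iff_le_add'] using h k hk

theorem Finset.inf'_le_sum_mul {ι : Type*} {s : Finset ι} (hs : s.Nonempty) (g : ι → ℝ)
    {q : ι → ℝ} (hq : ∀ i ∈ s, 0 ≤ q i) (hq1 : ∑ i ∈ s, q i = 1) :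
    s.inf' hs g ≤ ∑ i ∈ s, q i * g i :=
  calc s.inf' hs g = ∑ i ∈ s, q i * s.inf' hs g := by rw [← sum_mul, hq1, one_mul]
    _ ≤ ∑ i ∈ s, q i * g i :=
      sum_le_sum fun i hi => mul_le_mul_of_nonneg_left (inf'_le g hi) (hq i hi)

section MatrixGame

variable {A B : Type*} [Fintype A] [Fintype B] [Nonempty B]

/-- The paper's `V_{h,f}(x)` is `matrixGameValue (f_h(x, ·, ·))`. -/
noncomputable def matrixGameValue (g : A → B → ℝ) : ℝ :=
  sSup {v : ℝ | ∃ p : A → ℝ, (∀ a, 0 ≤ p a) ∧ (∑ a, p a = 1) ∧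
    v = univ.inf' univ_nonempty (fun b => ∑ a, p a * g a b)}

theorem matrixGameValue_zero : matrixGameValue (0 : A → B → ℝ) = 0 := by
  have hzero : ∀ v ∈ {v : ℝ | ∃ p : A → ℝ, (∀ a, 0 ≤ p a) ∧ (∑ a, p a = 1) ∧
      v = univ.inf' univ_nonempty (fun b : B => ∑ a, p a * (0 : A → B → ℝ) a b)}, v = 0 := by
    rintro v ⟨p, -, -, rfl⟩
    simp
  -- `sSup ∅ = 0` in `ℝ`, so no mixed strategy is needed to witness nonemptiness
  exact le_antisymm (Real.sSup_nonpos fun v hv => (hzero v hv).le)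
    (Real.sSup_nonneg fun v hv => (hzero v hv).ge)

theorem inf'_sum_mul_le_sum_sum_mul (p : A → ℝ) {q : B → ℝ} (hq : ∀ b, 0 ≤ q b)
    (hq1 : ∑ b, q b = 1) (g : A → B → ℝ) :
    univ.inf' univ_nonempty (fun b => ∑ a, p a * g a b) ≤ ∑ a, ∑ b, p a * q b * g a b :=
  calc _ ≤ ∑ b, q b * ∑ a, p a * g a b := inf'_le_sum_mul _ _ (fun b _ => hq b) hq1
    _ = ∑ a, ∑ b, p a * q b * g a b := by
        simp_rw [mul_sum]
        rw [sum_comm]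
        exact sum_congr rfl fun a _ => sum_congr rfl fun b _ => by ring

end MatrixGame

section OneStep

variable {S A B : Type*} [Fintype S] [Fintype A] [Fintype B]
  (d d' : S → ℝ) (μ : S → A → ℝ) (ν : S → B → ℝ) (P : S → A → B → S → ℝ)

theorem sum_mul_sum_transition_eq
    (hd' : ∀ x', d' x' = ∑ x, ∑ a, ∑ b, d x * μ x a * ν x b * P x a b x') (W : S → ℝ) :
    ∑ x, ∑ a, ∑ b, d x * μ x a * ν x b * ∑ x', P x a b x' * W x' = ∑ x', d' x' * W x' := by
  simp_rw [hd', sum_mul, mul_sum, ← mul_assoc]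
  refine (sum_congr rfl fun x _ => ?_).trans sum_comm
  refine (sum_congr rfl fun a _ => ?_).trans sum_comm
  exact sum_comm

theorem sum_mul_sub_le_sum_bellmanResidual_add (r f : S → A → B → ℝ) (Vf Vf' V V' : S → ℝ)
    (hd : ∀ x, 0 ≤ d x)
    (hd' : ∀ x', d' x' = ∑ x, ∑ a, ∑ b, d x * μ x a * ν x b * P x a b x')
    (hV : ∀ x, V x = ∑ a, ∑ b, μ x a * ν x b * (r x a b + ∑ x', P x a b x' * V' x'))
    (hVf : ∀ x, Vf x ≤ ∑ a, ∑ b, μ x a * ν x b * f x a b) :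
    ∑ x, d x * (Vf x - V x) ≤
      ∑ x, ∑ a, ∑ b, d x * μ x a * ν x b * (f x a b - r x a b - ∑ x', P x a b x' * Vf' x')
        + ∑ x', d' x' * (Vf' x' - V' x') := by
  have hgap : ∀ x, Vf x - V x ≤
      ∑ a, ∑ b, μ x a * ν x b * (f x a b - r x a b - ∑ x', P x a b x' * V' x') := by
    intro x
    simp_rw [hV x, sub_sub, mul_sub, sum_sub_distrib]
    linarith [hVf x]
  have hsplit : ∀ x a b, f x a b - r x a b - ∑ x', P x a b x' * V' x' =
      (f x a b - r x a b - ∑ x', P x a b x' * Vf' x') + ∑ x', P x a b x' * (Vf' x' - V' x') := by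
    intro x a b
    simp_rw [mul_sub, sum_sub_distrib]
    ring
  calc ∑ x, d x * (Vf x - V x)
      ≤ ∑ x, ∑ a, ∑ b, d x * μ x a * ν x b * (f x a b - r x a b - ∑ x', P x a b x' * V' x') :=
        sum_le_sum fun x _ => (mul_le_mul_of_nonneg_left (hgap x) (hd x)).trans_eq
          (by simp_rw [mul_sum, ← mul_assoc])
    _ = _ := by
        simp_rw [hsplit, mul_add, sum_add_distrib, sum_mul_sum_transition_eq d d' μ ν P hd']

end OneStep

theorem occupancy_nonneg {S A B : Type*} [Fintype S] [Fintype A] [Fintype B] {H : ℕ}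
    {d : ℕ → S → ℝ} {μ : ℕ → S → A → ℝ} {ν : ℕ → S → B → ℝ} {P : ℕ → S → A → B → S → ℝ}
    (hd1 : ∀ x, 0 ≤ d 1 x)
    (hdrec : ∀ h ∈ Icc 1 H, ∀ x',
      d (h + 1) x' = ∑ x, ∑ a, ∑ b, d h x * μ h x a * ν h x b * P h x a b x')
    (hμ : ∀ h ∈ Icc 1 H, ∀ x a, 0 ≤ μ h x a) (hν : ∀ h ∈ Icc 1 H, ∀ x b, 0 ≤ ν h x b)
    (hP : ∀ h ∈ Icc 1 H, ∀ x a b x', 0 ≤ P h x a b x') :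
    ∀ h ∈ Icc 1 H, ∀ x, 0 ≤ d h x := by
  intro h hh
  obtain ⟨h1, hhH⟩ := mem_Icc.mp hh
  induction h, h1 using Nat.le_induction with
  | base => exact hd1
  | succ h h1 ih =>
    have hh : h ∈ Icc 1 H := mem_Icc.mpr ⟨h1, by omega⟩
    intro x'
    rw [hdrec h hh]
    refine sum_nonneg fun x _ => sum_nonneg fun a _ => sum_nonneg fun b _ => ?_
    exact mul_nonneg (mul_nonneg (mul_nonneg (ih hh (by omega) x) (hμ h hh x a))
      (hν h hh x b)) (hP h hh x a b x')

theorem stmt16_general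
    {S A B : Type*} [Fintype S] [Fintype A] [Fintype B]
    [Nonempty B] [DecidableEq S]
    (H : ℕ)
    (P : ℕ → S → A → B → S → ℝ) (r : ℕ → S → A → B → ℝ) (x1 : S)
    (hPnn : ∀ h ∈ Icc 1 H, ∀ x a b x', 0 ≤ P h x a b x')
    (mu : ℕ → S → A → ℝ) (nu : ℕ → S → B → ℝ)
    (hmunn : ∀ h ∈ Icc 1 H, ∀ x a, 0 ≤ mu h x a)
    (hnunn : ∀ h ∈ Icc 1 H, ∀ x b, 0 ≤ nu h x b)
    (hnusum : ∀ h ∈ Icc 1 H, ∀ x, ∑ b, nu h x b = 1)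
    -- value functions of the joint policy (mu, nu), defined backward
    (V : ℕ → S → ℝ)
    (hVtop : ∀ x, V (H + 1) x = 0)
    (hVrec : ∀ h ∈ Icc 1 H, ∀ x,
      V h x = ∑ a, ∑ b, mu h x a * nu h x b *
        (r h x a b + ∑ x', P h x a b x' * V (h + 1) x'))
    -- occupancy measures of the joint policy (mu, nu)
    (docc : ℕ → S → ℝ)
    (hd1 : ∀ x, docc 1 x = if x = x1 then 1 else 0)
    (hdrec : ∀ h ∈ Icc 1 H, ∀ x',
      docc (h + 1) x' = ∑ x, ∑ a, ∑ b,
        docc h x * mu h x a * nu h x b * P h x a b x')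
    -- model-free hypothesis f and its Nash-equilibrium value function
    (f : ℕ → S → A → B → ℝ)
    (hftop : ∀ x a b, f (H + 1) x a b = 0)
    (Vf : ℕ → S → ℝ)
    (hVf : ∀ h x, Vf h x = sSup {v : ℝ | ∃ p : A → ℝ,
      (∀ a, 0 ≤ p a) ∧ (∑ a, p a = 1) ∧
      v = Finset.univ.inf' Finset.univ_nonempty
        (fun b => ∑ a, p a * f h x a b)})
    -- mu is Nash-greedy with respect to f
    (hgreedy : ∀ h ∈ Icc 1 H, ∀ x,
      Finset.univ.inf' Finset.univ_nonempty
        (fun b => ∑ a, mu h x a * f h x a b) = Vf h x) :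
    Vf 1 x1 - V 1 x1 ≤
      ∑ h ∈ Icc 1 H, ∑ x, ∑ a, ∑ b,
        docc h x * mu h x a * nu h x b *
          (f h x a b - r h x a b - ∑ x', P h x a b x' * Vf (h + 1) x') := by
  set G : ℕ → ℝ := fun h => ∑ x, docc h x * (Vf h x - V h x)
  have hdocc : ∀ h ∈ Icc 1 H, ∀ x, 0 ≤ docc h x :=
    occupancy_nonneg (fun x => by rw [hd1]; split <;> norm_num) hdrec hmunn hnunn hPnn
  have hstep : ∀ h ∈ Icc 1 H, G h ≤ (∑ x, ∑ a, ∑ b, docc h x * mu h x a * nu h x b *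
      (f h x a b - r h x a b - ∑ x', P h x a b x' * Vf (h + 1) x')) + G (h + 1) :=
    fun h hh => sum_mul_sub_le_sum_bellmanResidual_add _ _ _ _ _ _ _ _ _ _ _
      (hdocc h hh) (hdrec h hh) (hVrec h hh)
      fun x => hgreedy h hh x ▸ inf'_sum_mul_le_sum_sum_mul _ (hnunn h hh x) (hnusum h hh x) _
  have hVf_top : ∀ x, Vf (H + 1) x = 0 := fun x => by
    rw [hVf, show f (H + 1) x = 0 from funext₂ (hftop x)]
    exact matrixGameValue_zero
  have hG_one : G 1 = Vf 1 x1 - V 1 x1 := by simp [G, hd1]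
  have hG_top : G (H + 1) = 0 := by simp [G, hVf_top, hVtop]
  simpa [hG_one, hG_top] using sub_le_sum_Icc_of_le_add (by omega) hstep

/-- Lemma B.1 of the paper: value decomposition for the max-player in a
finite two-player zero-sum Markov game. -/
theorem stmt16
    {S A B : Type*} [Fintype S] [Fintype A] [Fintype B]
    [Nonempty S] [Nonempty A] [Nonempty B] [DecidableEq S]
    (H : ℕ) (hH : 0 < H)
    (P : ℕ → S → A → B → S → ℝ) (r : ℕ → S → A → B → ℝ) (x1 : S)
    (hPnn : ∀ h ∈ Icc 1 H, ∀ x a b x', 0 ≤ P h x a b x')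
    (hPsum : ∀ h ∈ Icc 1 H, ∀ x a b, ∑ x', P h x a b x' = 1)
    (mu : ℕ → S → A → ℝ) (nu : ℕ → S → B → ℝ)
    (hmunn : ∀ h ∈ Icc 1 H, ∀ x a, 0 ≤ mu h x a)
    (hmusum : ∀ h ∈ Icc 1 H, ∀ x, ∑ a, mu h x a = 1)
    (hnunn : ∀ h ∈ Icc 1 H, ∀ x b, 0 ≤ nu h x b)
    (hnusum : ∀ h ∈ Icc 1 H, ∀ x, ∑ b, nu h x b = 1)
    -- value functions of the joint policy (mu, nu), defined backward
    (V : ℕ → S → ℝ)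
    (hVtop : ∀ x, V (H + 1) x = 0)
    (hVrec : ∀ h ∈ Icc 1 H, ∀ x,
      V h x = ∑ a, ∑ b, mu h x a * nu h x b *
        (r h x a b + ∑ x', P h x a b x' * V (h + 1) x'))
    -- occupancy measures of the joint policy (mu, nu)
    (docc : ℕ → S → ℝ)
    (hd1 : ∀ x, docc 1 x = if x = x1 then 1 else 0)
    (hdrec : ∀ h ∈ Icc 1 H, ∀ x',
      docc (h + 1) x' = ∑ x, ∑ a, ∑ b,
        docc h x * mu h x a * nu h x b * P h x a b x')
    -- model-free hypothesis f and its Nash-equilibrium value function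
    (f : ℕ → S → A → B → ℝ)
    (hftop : ∀ x a b, f (H + 1) x a b = 0)
    (Vf : ℕ → S → ℝ)
    (hVf : ∀ h x, Vf h x = sSup {v : ℝ | ∃ p : A → ℝ,
      (∀ a, 0 ≤ p a) ∧ (∑ a, p a = 1) ∧
      v = Finset.univ.inf' Finset.univ_nonempty
        (fun b => ∑ a, p a * f h x a b)})
    -- mu is Nash-greedy with respect to f
    (hgreedy : ∀ h ∈ Icc 1 H, ∀ x,
      Finset.univ.inf' Finset.univ_nonempty
        (fun b => ∑ a, mu h x a * f h x a b) = Vf h x) :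
    Vf 1 x1 - V 1 x1 ≤
      ∑ h ∈ Icc 1 H, ∑ x, ∑ a, ∑ b,
        docc h x * mu h x a * nu h x b *
          (f h x a b - r h x a b - ∑ x', P h x a b x' * Vf (h + 1) x') :=
  stmt16_general H P r x1 hPnn mu nu hmunn hnunn hnusum V hVtop hVrec docc hd1 hdrec f hftop Vf hVf
    hgreedy
end

section
/- Consider a finite-horizon two-player zero-sum Markov game with finite nonempty state set S, finite nonempty action sets A (max-player) and B (min-player), horizon H, transition kernels P_h : S x A x B -> (S -> R) with P_h(x,a,b,.) nonnegative and summing to 1 over S for each h in {1,...,H}, reward functions r_h : S x A x B -> R, and fixed initial state x_1 in S. For W : S -> R write (P_h W)(x,a,b) = sum_{x'} P_h(x,a,b,x') W(x'). Given a policy pair (mu, nu), where mu_h : S -> (A -> R) and nu_h : S -> (B -> R) assign probability vectors, define the value functions backward by V_{H+1}^{mu,nu} = 0 and V_h^{mu,nu}(x) = sum_{a,b} mu_h(x,a) nu_h(x,b) [ r_h(x,a,b) + (P_h V_{h+1}^{mu,nu})(x,a,b) ]; define the occupancy measures by d_1 = the point mass at x_1 and d_{h+1}(x') = sum_{x,a,b}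 d_h(x) mu_h(x,a) nu_h(x,b) P_h(x,a,b,x'), and for G : S x A x B -> R write E_{(mu,nu)}[G_h] = sum_{x,a,b} d_h(x) mu_h(x,a) nu_h(x,b) G(x,a,b). Let mu be any max-player policy and let g = (g_1, ..., g_{H+1}) with g_h : S x A x B -> R and g_{H+1} = 0, and define V_{h,g}^{mu,dagger}(x) = min_{b in B} sum_a mu_h(x,a) g_h(x,a,b). Suppose the min-player policy nu is a best response with respect to (g, mu), i.e., for all h in {1,...,H} and all x in S, sum_{a,b} mu_h(x,a) nu_h(x,b) g_h(x,a,b) = V_{h,g}^{mu,dagger}(x). Then: V_1^{mu,nu}(x_1) - V_{1,g}^{mu,dagger}(x_1) = - sum_{h=1}^H E_{(mu,nu)}[ E_h^mu ], where E_h^mu(x,a,b) = g_h(x,a,b) - r_h(x,a,b) - (P_h V_{h+1,g}^{mu,dagger})(x,a,b). -/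
/-!
Write `D h = E_{d_h}[V_h - V_{h,g}^{μ,†}]` for the occupancy-weighted value gap at step `h`.
Since `ν` attains the minimum defining `V_{h,g}^{μ,†}`, the Bellman equation for `V_h` and the
flow equation for the occupancy measures give `E_{(μ,ν)}[E_h^μ] = D (h + 1) - D h`.
Summing over `h` telescopes to `D (H + 1) - D 1 = -(V_1(x_1) - V_{1,g}^{μ,†}(x_1))`, because
`g_{H+1} = 0` forces `V_{H+1,g}^{μ,†} = 0` and `d_1` is the point mass at `x_1`.
-/

open Finset

namespace MarkovGame

variable {S A B : Type*} [Fintype S] [Fintype A] [Fintype B]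

/-- The paper's `E_{(μ,ν)}[G]`, taken from the state distribution `d` instead of `d_h`. -/
def jointExpect (d : S → ℝ) (μ : S → A → ℝ) (ν : S → B → ℝ) (G : S → A → B → ℝ) : ℝ :=
  ∑ x, ∑ a, ∑ b, d x * μ x a * ν x b * G x a b

variable (d : S → ℝ) (μ : S → A → ℝ) (ν : S → B → ℝ)

theorem jointExpect_sub (G G' : S → A → B → ℝ) :
    jointExpect d μ ν (fun x a b => G x a b - G' x a b) =
      jointExpect d μ ν G - jointExpect d μ ν G' := by
  simp only [jointExpect, mul_sub, sum_sub_distrib]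

theorem sum_mul_policy_sum_eq_jointExpect (G : S → A → B → ℝ) :
    ∑ x, d x * ∑ a, ∑ b, μ x a * ν x b * G x a b = jointExpect d μ ν G := by
  simp only [jointExpect, mul_sum, mul_assoc]

theorem sum_pushforward_mul (P : S → A → B → S → ℝ) (W : S → ℝ) :
    ∑ x', (∑ x, ∑ a, ∑ b, d x * μ x a * ν x b * P x a b x') * W x' =
      jointExpect d μ ν (fun x a b => ∑ x', P x a b x' * W x') := by
  simp only [jointExpect, sum_mul, mul_sum, mul_assoc]
  rw [sum_comm]
  refine sum_congr rfl fun x _ => ?_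
  rw [sum_comm]
  exact sum_congr rfl fun a _ => sum_comm

theorem jointExpect_bellmanResidual_eq_sub
    (P : S → A → B → S → ℝ) (r g : S → A → B → ℝ) (V Vg V' Vg' d' : S → ℝ)
    (hV : ∀ x, V x = ∑ a, ∑ b, μ x a * ν x b * (r x a b + ∑ x', P x a b x' * V' x'))
    (hbr : ∀ x, ∑ a, ∑ b, μ x a * ν x b * g x a b = Vg x)
    (hd' : ∀ x', d' x' = ∑ x, ∑ a, ∑ b, d x * μ x a * ν x b * P x a b x') :
    jointExpect d μ ν (fun x a b => g x a b - r x a b - ∑ x', P x a b x' * Vg' x') =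
      ∑ x', d' x' * (V' x' - Vg' x') - ∑ x, d x * (V x - Vg x) := by
  have hgap : ∀ x, V x - Vg x = ∑ a, ∑ b, μ x a * ν x b *
      (r x a b + ∑ x', P x a b x' * V' x' - g x a b) := by
    intro x
    simp only [hV, ← hbr, mul_sub, sum_sub_distrib]
  simp only [hgap, hd', sum_mul_policy_sum_eq_jointExpect, sum_pushforward_mul, ← jointExpect_sub]
  unfold jointExpect
  refine sum_congr rfl fun x _ => sum_congr rfl fun a _ => sum_congr rfl fun b _ => ?_
  simp only [mul_sub, sum_sub_distrib]
  ring

end MarkovGame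

open MarkovGame

theorem stmt17_general
    {S A B : Type*} [Fintype S] [Fintype A] [Fintype B]
    [Nonempty B] [DecidableEq S]
    (H : ℕ)
    (P : ℕ → S → A → B → S → ℝ) (r : ℕ → S → A → B → ℝ) (x1 : S)
    (mu : ℕ → S → A → ℝ) (nu : ℕ → S → B → ℝ)
    -- value functions of the joint policy (mu, nu), defined backward
    (V : ℕ → S → ℝ)
    (hVtop : ∀ x, V (H + 1) x = 0)
    (hVrec : ∀ h ∈ Icc 1 H, ∀ x,
      V h x = ∑ a, ∑ b, mu h x a * nu h x b *
        (r h x a b + ∑ x', P h x a b x' * V (h + 1) x'))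
    -- occupancy measures of the joint policy (mu, nu)
    (docc : ℕ → S → ℝ)
    (hd1 : ∀ x, docc 1 x = if x = x1 then 1 else 0)
    (hdrec : ∀ h ∈ Icc 1 H, ∀ x',
      docc (h + 1) x' = ∑ x, ∑ a, ∑ b,
        docc h x * mu h x a * nu h x b * P h x a b x')
    -- min-player hypothesis g and its best-response value function given mu
    (g : ℕ → S → A → B → ℝ)
    (hgtop : ∀ x a b, g (H + 1) x a b = 0)
    (Vg : ℕ → S → ℝ)
    (hVg : ∀ h x, Vg h x = Finset.univ.inf' Finset.univ_nonempty
      (fun b => ∑ a, mu h x a * g h x a b))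
    -- nu is a best response with respect to (g, mu)
    (hbr : ∀ h ∈ Icc 1 H, ∀ x,
      ∑ a, ∑ b, mu h x a * nu h x b * g h x a b = Vg h x) :
    V 1 x1 - Vg 1 x1 =
      -∑ h ∈ Icc 1 H, ∑ x, ∑ a, ∑ b,
        docc h x * mu h x a * nu h x b *
          (g h x a b - r h x a b - ∑ x', P h x a b x' * Vg (h + 1) x') := by
  set D : ℕ → ℝ := fun h => ∑ x, docc h x * (V h x - Vg h x) with hD
  have hVgtop : ∀ x, Vg (H + 1) x = 0 := fun x => by simp [hVg, hgtop]
  have hstep : ∀ h ∈ Icc 1 H, jointExpect (docc h) (mu h) (nu h)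
      (fun x a b => g h x a b - r h x a b - ∑ x', P h x a b x' * Vg (h + 1) x') =
        D (h + 1) - D h := fun h hh =>
    jointExpect_bellmanResidual_eq_sub _ _ _ _ _ _ _ _ _ _ _
      (hVrec h hh) (hbr h hh) (hdrec h hh)
  have hD1 : D 1 = V 1 x1 - Vg 1 x1 := by simp [hD, hd1]
  have hDtop : D (H + 1) = 0 := by simp [hD, hVtop, hVgtop]
  change _ = -∑ h ∈ Icc 1 H, jointExpect (docc h) (mu h) (nu h) _
  rw [sum_congr rfl hstep, ← Ico_add_one_right_eq_Icc, sum_Ico_sub D (by omega), hDtop, hD1]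
  ring

/-- Lemma B.2 of the paper: value decomposition for the min-player in a
finite two-player zero-sum Markov game. -/
theorem stmt17
    {S A B : Type*} [Fintype S] [Fintype A] [Fintype B]
    [Nonempty S] [Nonempty A] [Nonempty B] [DecidableEq S]
    (H : ℕ) (hH : 0 < H)
    (P : ℕ → S → A → B → S → ℝ) (r : ℕ → S → A → B → ℝ) (x1 : S)
    (hPnn : ∀ h ∈ Icc 1 H, ∀ x a b x', 0 ≤ P h x a b x')
    (hPsum : ∀ h ∈ Icc 1 H, ∀ x a b, ∑ x', P h x a b x' = 1)
    (mu : ℕ → S → A → ℝ) (nu : ℕ → S → B → ℝ)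
    (hmunn : ∀ h ∈ Icc 1 H, ∀ x a, 0 ≤ mu h x a)
    (hmusum : ∀ h ∈ Icc 1 H, ∀ x, ∑ a, mu h x a = 1)
    (hnunn : ∀ h ∈ Icc 1 H, ∀ x b, 0 ≤ nu h x b)
    (hnusum : ∀ h ∈ Icc 1 H, ∀ x, ∑ b, nu h x b = 1)
    -- value functions of the joint policy (mu, nu), defined backward
    (V : ℕ → S → ℝ)
    (hVtop : ∀ x, V (H + 1) x = 0)
    (hVrec : ∀ h ∈ Icc 1 H, ∀ x,
      V h x = ∑ a, ∑ b, mu h x a * nu h x b *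
        (r h x a b + ∑ x', P h x a b x' * V (h + 1) x'))
    -- occupancy measures of the joint policy (mu, nu)
    (docc : ℕ → S → ℝ)
    (hd1 : ∀ x, docc 1 x = if x = x1 then 1 else 0)
    (hdrec : ∀ h ∈ Icc 1 H, ∀ x',
      docc (h + 1) x' = ∑ x, ∑ a, ∑ b,
        docc h x * mu h x a * nu h x b * P h x a b x')
    -- min-player hypothesis g and its best-response value function given mu
    (g : ℕ → S → A → B → ℝ)
    (hgtop : ∀ x a b, g (H + 1) x a b = 0)
    (Vg : ℕ → S → ℝ)
    (hVg : ∀ h x, Vg h x = Finset.univ.inf' Finset.univ_nonempty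
      (fun b => ∑ a, mu h x a * g h x a b))
    -- nu is a best response with respect to (g, mu)
    (hbr : ∀ h ∈ Icc 1 H, ∀ x,
      ∑ a, ∑ b, mu h x a * nu h x b * g h x a b = Vg h x) :
    V 1 x1 - Vg 1 x1 =
      -∑ h ∈ Icc 1 H, ∑ x, ∑ a, ∑ b,
        docc h x * mu h x a * nu h x b *
          (g h x a b - r h x a b - ∑ x', P h x a b x' * Vg (h + 1) x') :=
  stmt17_general H P r x1 mu nu V hVtop hVrec docc hd1 hdrec g hgtop Vg hVg hbr
end
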